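/- arXiv:1806.09772 — 8 statements merged into one kernel-verified Lean document; each statement's English description precedes it below -/
import Mathlib

section
/- Fix n ≥ 1, r ≥ 1, real numbers 0 = x_{−1} < x₀ < x₁ < ⋯ < x_r = 1, symmetric positive definite n×n real matrices Δ₁, …, Δ_r, a vector h ∈ ℝⁿ, and a symmetric positive definite n×n matrix Λ. Define Λ_r = Λ and Λ_k = Λ_{k+1} − x_k Δ_{k+1} for 0 ≤ k ≤ r−1, and assume Λ₀ is positive definite. Define Y_r : (ℝⁿ)^r → ℝ by Y_r(z₁,…,z_r) = log( (2π)^(−n/2) ∫_{ℝⁿ} exp( ⟨ω, z₁+⋯+z_r+h⟩ − (1/2)⟨Λω, ω⟩ ) dω ), and recursively for 0 ≤ k ≤ r−1 define Y_k : (ℝⁿ)^k → ℝ by Y_k(z₁,…,z_k) = (1/x_k) · log( ((2π)ⁿ det Δ_{k+1})^(−1/2) ∫_{ℝⁿ} exp( x_k · Y_{k+1}(z₁,…,z_k,z) ) · exp(−(1/2)⟨Δ_{k+1}⁻¹ z, z⟩) dz ). Then Y₀ = −(1/2) log det Λ + (1/2)⟨Λ₀⁻¹ h, h⟩ + (1/2)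 Σ_{k=0}^{r−1} (1/x_k) log( det Λ_{k+1} / det Λ_k ). -/
/-!
Each `Y_k` is `c_k + ½⟨Λ_k⁻¹ v, v⟩` with `v = z₁ + ⋯ + z_k + h` and a constant `c_k`, by
downward induction on `k`. For `k = r` this is the Gaussian integral
`∫ exp (⟨ω, b⟩ - ½⟨S ω, ω⟩) = (2π)^{n/2} (det S)^{-1/2} exp (½⟨S⁻¹ b, b⟩)`.
From `k + 1` to `k`, the integrand is again Gaussian in `z`, with precision matrix
`B = Δ⁻¹ - x_k Λ_{k+1}⁻¹ = Δ⁻¹ Λ_k Λ_{k+1}⁻¹`. It is positive definite because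
`B⁻¹ = Δ + x_k Δ Λ_k⁻¹ Δ`, and `x_k Λ_{k+1}⁻¹ B⁻¹ Λ_{k+1}⁻¹ = Λ_k⁻¹ - Λ_{k+1}⁻¹` turns the quadratic
form into `½⟨Λ_k⁻¹ v, v⟩`, while `det B = det Λ_k / (det Δ det Λ_{k+1})` contributes
`½ x_k⁻¹ log (det Λ_{k+1} / det Λ_k)` to `c_k`.
-/

open MeasureTheory Matrix Real
open scoped MatrixOrder

variable {ι : Type*}

theorem Matrix.PosDef.isSymm {S : Matrix ι ι ℝ} (hS : S.PosDef) : S.IsSymm :=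
  isHermitian_iff_isSymm.mp hS.isHermitian

theorem posDef_of_eq_sub_smul {Δ Λ₀ Λ₁ : Matrix ι ι ℝ} {t : ℝ} (hΔ : Δ.PosSemidef)
    (hΛ₀ : Λ₀.PosDef) (ht : 0 ≤ t) (hΛ : Λ₀ = Λ₁ - t • Δ) : Λ₁.PosDef := by
  rw [← eq_sub_iff_add_eq.mp hΛ]
  exact hΛ₀.add_posSemidef (hΔ.smul ht)

variable [Fintype ι]

theorem Matrix.IsSymm.mulVec_dotProduct_comm {R : Type*} [CommSemiring R] {A : Matrix ι ι R}
    (hA : A.IsSymm) (u v : ι → R) : A *ᵥ u ⬝ᵥ v = A *ᵥ v ⬝ᵥ u := by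
  rw [dotProduct_comm, dotProduct_mulVec, ← mulVec_transpose, hA.eq]

theorem Matrix.IsSymm.gaussian_exponent_eq {M : Matrix ι ι ℝ} (hM : M.IsSymm)
    (N : Matrix ι ι ℝ) (t c : ℝ) (v w : ι → ℝ) :
    t * (c + 1 / 2 * (M *ᵥ (v + w) ⬝ᵥ (v + w))) + -(1 / 2) * (N *ᵥ w ⬝ᵥ w) =
      t * c + t / 2 * (M *ᵥ v ⬝ᵥ v) +
        (w ⬝ᵥ t • (M *ᵥ v) - 1 / 2 * ((N - t • M) *ᵥ w ⬝ᵥ w)) := by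
  simp only [mulVec_add, add_dotProduct, dotProduct_add, sub_mulVec, sub_dotProduct, smul_mulVec,
    smul_dotProduct, dotProduct_smul, smul_eq_mul, hM.mulVec_dotProduct_comm w v,
    dotProduct_comm w (M *ᵥ v)]
  ring

theorem integral_exp_neg_half_sum_sq :
    ∫ w : ι → ℝ, exp (-(1 / 2) * ∑ i, w i ^ 2) = √(2 * π) ^ Fintype.card ι := by
  simp_rw [Finset.mul_sum, Real.exp_sum]
  rw [volume_pi, integral_fintype_prod_eq_pow (fun t : ℝ => exp (-(1 / 2) * t ^ 2)),
    integral_gaussian, div_div_eq_mul_div, div_one, mul_comm]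

variable [DecidableEq ι]

theorem integral_comp_mulVec {E : Type*} [NormedAddCommGroup E] [NormedSpace ℝ E]
    {M : Matrix ι ι ℝ} (hM : M.det ≠ 0) (f : (ι → ℝ) → E) :
    ∫ w, f (M *ᵥ w) = |M.det|⁻¹ • ∫ w, f w := by
  let e : (ι → ℝ) ≃ᵐ (ι → ℝ) := (M.toLinearEquiv' (M.invertibleOfIsUnitDet hM.isUnit)
    ).toContinuousLinearEquiv.toHomeomorph.toMeasurableEquiv
  have hmap : Measure.map e volume = ENNReal.ofReal |M.det|⁻¹ • volume := by
    rw [← abs_inv]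
    exact Real.map_matrix_volume_pi_eq_smul_volume_pi hM
  have h := integral_map_equiv (μ := volume) e f
  rw [hmap, integral_smul_measure, ENNReal.toReal_ofReal (by positivity)] at h
  exact h.symm

namespace Matrix.PosDef

variable {S : Matrix ι ι ℝ}

theorem integral_exp_neg_half_quadratic (hS : S.PosDef) :
    ∫ w, exp (-(1 / 2) * (S *ᵥ w ⬝ᵥ w)) = √(2 * π) ^ Fintype.card ι / √S.det := by
  obtain ⟨T, rfl⟩ := CStarAlgebra.nonneg_iff_eq_star_mul_self.mp hS.posSemidef.nonneg
  have hdet : (star T * T).det = T.det ^ 2 := by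
    rw [det_mul, star_eq_conjTranspose, det_conjTranspose, star_trivial, sq]
  have hT : T.det ≠ 0 := fun h => hS.det_pos.ne' (by rw [hdet, h, sq, zero_mul])
  have hquad (w : ι → ℝ) : (star T * T) *ᵥ w ⬝ᵥ w = ∑ i, (T *ᵥ w) i ^ 2 := by
    rw [← mulVec_mulVec, dotProduct_comm, dotProduct_mulVec, star_eq_conjTranspose,
      vecMul_conjTranspose, star_trivial, dotProduct]
    simp only [sq, star_trivial]
  simp_rw [hquad]
  rw [integral_comp_mulVec hT (fun u => exp (-(1 / 2) * ∑ i, u i ^ 2)),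
    integral_exp_neg_half_sum_sq, hdet, sqrt_sq_eq_abs, smul_eq_mul, inv_mul_eq_div]

theorem integral_exp_linear_sub_half_quadratic (hS : S.PosDef) (b : ι → ℝ) :
    ∫ w, exp (w ⬝ᵥ b - (1 / 2) * (S *ᵥ w ⬝ᵥ w)) =
      √(2 * π) ^ Fintype.card ι / √S.det * exp ((1 / 2) * (S⁻¹ *ᵥ b ⬝ᵥ b)) := by
  set m := S⁻¹ *ᵥ b
  have hm : S *ᵥ m = b := by rw [mulVec_mulVec, mul_nonsing_inv _ hS.det_pos.ne'.isUnit, one_mulVec]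
  have hSm (w : ι → ℝ) : S *ᵥ w ⬝ᵥ m = w ⬝ᵥ b := by
    rw [hS.isSymm.mulVec_dotProduct_comm, hm, dotProduct_comm]
  -- completing the square around the mean `m = S⁻¹ b`
  have hsq (w : ι → ℝ) : (w + m) ⬝ᵥ b - (1 / 2) * (S *ᵥ (w + m) ⬝ᵥ (w + m)) =
      (1 / 2) * (m ⬝ᵥ b) + -(1 / 2) * (S *ᵥ w ⬝ᵥ w) := by
    simp only [mulVec_add, hm, add_dotProduct, dotProduct_add, hSm]
    rw [dotProduct_comm b w, dotProduct_comm b m]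
    ring
  rw [← integral_add_right_eq_self _ m]
  simp_rw [hsq, exp_add]
  rw [integral_const_mul, hS.integral_exp_neg_half_quadratic, mul_comm, dotProduct_comm m]

theorem integral_exp_linear_sub_half_quadratic_pos (hS : S.PosDef) (b : ι → ℝ) :
    0 < ∫ w, exp (w ⬝ᵥ b - (1 / 2) * (S *ᵥ w ⬝ᵥ w)) := by
  rw [hS.integral_exp_linear_sub_half_quadratic]
  have := hS.det_pos
  positivity

theorem log_integral_exp_linear_sub_half_quadratic (hS : S.PosDef) (b : ι → ℝ) :
    log (∫ w, exp (w ⬝ᵥ b - (1 / 2) * (S *ᵥ w ⬝ᵥ w))) =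
      Fintype.card ι / 2 * log (2 * π) - (1 / 2) * log S.det + (1 / 2) * (S⁻¹ *ᵥ b ⬝ᵥ b) := by
  have hdet := hS.det_pos
  rw [hS.integral_exp_linear_sub_half_quadratic, log_mul (by positivity) (exp_ne_zero _),
    log_div (by positivity) (by positivity), log_pow, log_sqrt (by positivity),
    log_sqrt hdet.le, log_exp]
  ring

theorem log_rpow_mul_integral_exp_linear_sub_half_quadratic (hS : S.PosDef) (b : ι → ℝ) :
    log ((2 * π) ^ (-(Fintype.card ι : ℝ) / 2) * ∫ w, exp (w ⬝ᵥ b - 1 / 2 * (S *ᵥ w ⬝ᵥ w))) =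
      -(1 / 2) * log S.det + 1 / 2 * (S⁻¹ *ᵥ b ⬝ᵥ b) := by
  rw [log_mul (by positivity) (hS.integral_exp_linear_sub_half_quadratic_pos b).ne',
    log_rpow (by positivity), hS.log_integral_exp_linear_sub_half_quadratic]
  ring

end Matrix.PosDef

section Recursion

variable {Δ Λ₀ Λ₁ : Matrix ι ι ℝ} {t : ℝ}

theorem inv_sub_smul_inv_eq_of_eq_sub_smul (hΔ : IsUnit Δ.det) (hΛ₁ : IsUnit Λ₁.det)
    (hΛ : Λ₀ = Λ₁ - t • Δ) : Δ⁻¹ - t • Λ₁⁻¹ = Δ⁻¹ * Λ₀ * Λ₁⁻¹ := by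
  rw [hΛ, Matrix.mul_sub, mul_smul_comm, nonsing_inv_mul Δ hΔ, Matrix.sub_mul, smul_mul_assoc,
    Matrix.one_mul, Matrix.mul_assoc, mul_nonsing_inv Λ₁ hΛ₁, Matrix.mul_one]

theorem inv_inv_sub_smul_inv_of_eq_sub_smul (hΔ : IsUnit Δ.det) (hΛ₁ : IsUnit Λ₁.det)
    (hΛ : Λ₀ = Λ₁ - t • Δ) : (Δ⁻¹ - t • Λ₁⁻¹)⁻¹ = Λ₁ * Λ₀⁻¹ * Δ := by
  rw [inv_sub_smul_inv_eq_of_eq_sub_smul hΔ hΛ₁ hΛ, Matrix.mul_inv_rev, Matrix.mul_inv_rev,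
    nonsing_inv_nonsing_inv Δ hΔ, nonsing_inv_nonsing_inv Λ₁ hΛ₁, Matrix.mul_assoc]

theorem det_inv_sub_smul_inv_of_eq_sub_smul (hΔ : IsUnit Δ.det) (hΛ₁ : IsUnit Λ₁.det)
    (hΛ : Λ₀ = Λ₁ - t • Δ) : (Δ⁻¹ - t • Λ₁⁻¹).det = Λ₀.det / (Δ.det * Λ₁.det) := by
  rw [inv_sub_smul_inv_eq_of_eq_sub_smul hΔ hΛ₁ hΛ, det_mul, det_mul, det_nonsing_inv,
    det_nonsing_inv, Ring.inverse_eq_inv, Ring.inverse_eq_inv]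
  field_simp [hΔ.ne_zero, hΛ₁.ne_zero]

theorem inv_sub_smul_inv_quadratic_of_eq_sub_smul (hΔ : IsUnit Δ.det) (hΛ₀ : IsUnit Λ₀.det)
    (hΛ₁ : IsUnit Λ₁.det) (hΛ₁s : Λ₁.IsSymm) (hΛ : Λ₀ = Λ₁ - t • Δ) (v : ι → ℝ) :
    (Δ⁻¹ - t • Λ₁⁻¹)⁻¹ *ᵥ (t • (Λ₁⁻¹ *ᵥ v)) ⬝ᵥ t • (Λ₁⁻¹ *ᵥ v) =
      t * (Λ₀⁻¹ *ᵥ v ⬝ᵥ v - Λ₁⁻¹ *ᵥ v ⬝ᵥ v) := by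
  set u := Λ₁⁻¹ *ᵥ v
  have hu : Λ₁ *ᵥ u = v := by rw [mulVec_mulVec, mul_nonsing_inv Λ₁ hΛ₁, one_mulVec]
  have htΔu : t • (Δ *ᵥ u) = v - Λ₀ *ᵥ u := by
    rw [hΛ, sub_mulVec, smul_mulVec, hu, sub_sub_cancel]
  have hΛ₀u : Λ₀⁻¹ *ᵥ (Λ₀ *ᵥ u) = u := by
    rw [mulVec_mulVec, nonsing_inv_mul Λ₀ hΛ₀, one_mulVec]
  rw [inv_inv_sub_smul_inv_of_eq_sub_smul hΔ hΛ₁ hΛ, ← mulVec_mulVec, ← mulVec_mulVec,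
    hΛ₁s.mulVec_dotProduct_comm, mulVec_smul, mulVec_smul, hu, htΔu, mulVec_sub, hΛ₀u,
    smul_dotProduct, dotProduct_sub, dotProduct_comm v, dotProduct_comm v u, smul_eq_mul]

theorem posDef_inv_sub_smul_inv_of_eq_sub_smul (hΔ : Δ.PosDef) (hΛ₀ : Λ₀.PosDef) (ht : 0 ≤ t)
    (hΛ : Λ₀ = Λ₁ - t • Δ) : (Δ⁻¹ - t • Λ₁⁻¹).PosDef := by
  have hΛ₁ := posDef_of_eq_sub_smul hΔ.posSemidef hΛ₀ ht hΛ
  have hinv : (Δ⁻¹ - t • Λ₁⁻¹)⁻¹ = Δ + t • (Δᴴ * Λ₀⁻¹ * Δ) := by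
    rw [inv_inv_sub_smul_inv_of_eq_sub_smul hΔ.det_pos.ne'.isUnit hΛ₁.det_pos.ne'.isUnit hΛ,
      ← eq_sub_iff_add_eq.mp hΛ, hΔ.isHermitian.eq, Matrix.add_mul, Matrix.add_mul,
      mul_nonsing_inv Λ₀ hΛ₀.det_pos.ne'.isUnit, Matrix.one_mul, smul_mul_assoc, smul_mul_assoc]
  rw [← posDef_inv_iff, hinv]
  exact hΔ.add_posSemidef ((hΛ₀.inv.posSemidef.conjTranspose_mul_mul_same Δ).smul ht)

theorem log_integral_exp_gaussian_step (hΔ : Δ.PosDef) (hΛ₀ : Λ₀.PosDef) (ht : 0 < t)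
    (hΛ : Λ₀ = Λ₁ - t • Δ) (c : ℝ) (v : ι → ℝ) :
    1 / t * log (((2 * π) ^ Fintype.card ι * Δ.det) ^ (-(1 : ℝ) / 2) *
      ∫ w, exp (t * (c + 1 / 2 * (Λ₁⁻¹ *ᵥ (v + w) ⬝ᵥ (v + w)))) *
        exp (-(1 / 2) * (Δ⁻¹ *ᵥ w ⬝ᵥ w))) =
      c + 1 / 2 * (1 / t * log (Λ₁.det / Λ₀.det)) + 1 / 2 * (Λ₀⁻¹ *ᵥ v ⬝ᵥ v) := by
  have hΛ₁ := posDef_of_eq_sub_smul hΔ.posSemidef hΛ₀ ht.le hΛ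
  have hB := posDef_inv_sub_smul_inv_of_eq_sub_smul hΔ hΛ₀ ht.le hΛ
  have hΔd := hΔ.det_pos
  have hΛ₀d := hΛ₀.det_pos
  have hΛ₁d := hΛ₁.det_pos
  have hint : (∫ w, exp (t * (c + 1 / 2 * (Λ₁⁻¹ *ᵥ (v + w) ⬝ᵥ (v + w)))) *
        exp (-(1 / 2) * (Δ⁻¹ *ᵥ w ⬝ᵥ w))) =
      exp (t * c + t / 2 * (Λ₁⁻¹ *ᵥ v ⬝ᵥ v)) * ∫ w, exp (w ⬝ᵥ t • (Λ₁⁻¹ *ᵥ v) -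
        1 / 2 * ((Δ⁻¹ - t • Λ₁⁻¹) *ᵥ w ⬝ᵥ w)) := by
    rw [← integral_const_mul]
    congr 1 with w
    rw [← exp_add, ← exp_add, hΛ₁.inv.isSymm.gaussian_exponent_eq]
  have hI := hB.integral_exp_linear_sub_half_quadratic_pos (t • (Λ₁⁻¹ *ᵥ v))
  rw [hint, log_mul (by positivity) (by positivity), log_mul (by positivity) hI.ne', log_exp,
    hB.log_integral_exp_linear_sub_half_quadratic,
    inv_sub_smul_inv_quadratic_of_eq_sub_smul hΔd.ne'.isUnit hΛ₀d.ne'.isUnit hΛ₁d.ne'.isUnit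
      hΛ₁.isSymm hΛ, det_inv_sub_smul_inv_of_eq_sub_smul hΔd.ne'.isUnit hΛ₁d.ne'.isUnit hΛ,
    log_rpow (by positivity), log_mul (by positivity) hΔd.ne', log_pow,
    log_div hΛ₀d.ne' (by positivity), log_mul hΔd.ne' hΛ₁d.ne', log_div hΛ₁d.ne' hΛ₀d.ne']
  field_simp
  ring

end Recursion

theorem stmt1_general (n r : ℕ)
    (x : ℕ → ℝ) (hx0 : 0 < x 0) (hxmono : ∀ k < r, x k < x (k + 1))
    (Δ : ℕ → Matrix (Fin n) (Fin n) ℝ) (hΔ : ∀ k, 1 ≤ k → k ≤ r → (Δ k).PosDef)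
    (hvec : Fin n → ℝ)
    (Λ : Matrix (Fin n) (Fin n) ℝ) (hΛ : Λ.PosDef)
    (Λseq : ℕ → Matrix (Fin n) (Fin n) ℝ)
    (hΛr : Λseq r = Λ)
    (hΛrec : ∀ k < r, Λseq k = Λseq (k + 1) - x k • Δ (k + 1))
    (hΛ0 : (Λseq 0).PosDef)
    (Y : (k : ℕ) → (Fin k → (Fin n → ℝ)) → ℝ)
    (hYr : ∀ z : Fin r → (Fin n → ℝ),
      Y r z = Real.log ((2 * Real.pi) ^ (-(n : ℝ) / 2) *
        ∫ ω : Fin n → ℝ,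
          Real.exp ((ω ⬝ᵥ (∑ i, z i + hvec)) - (1 / 2) * (Λ.mulVec ω ⬝ᵥ ω))))
    (hYrec : ∀ k, k < r → ∀ z : Fin k → (Fin n → ℝ),
      Y k z = (1 / x k) * Real.log (((2 * Real.pi) ^ n * (Δ (k + 1)).det) ^ (-(1 : ℝ) / 2) *
        ∫ w : Fin n → ℝ,
          Real.exp (x k * Y (k + 1) (Fin.snoc z w)) *
            Real.exp (-(1 / 2) * ((Δ (k + 1))⁻¹.mulVec w ⬝ᵥ w)))) :
    Y 0 Fin.elim0 = -(1 / 2) * Real.log Λ.det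
        + (1 / 2) * ((Λseq 0)⁻¹.mulVec hvec ⬝ᵥ hvec)
        + (1 / 2) * ∑ k ∈ Finset.range r,
            (1 / x k) * Real.log ((Λseq (k + 1)).det / (Λseq k).det) := by
  have hxpos : ∀ k < r, 0 < x k := by
    intro k hk
    induction k with
    | zero => exact hx0
    | succ k ih => exact (ih (by omega)).trans (hxmono k (by omega))
  have hΛpd : ∀ k ≤ r, (Λseq k).PosDef := by
    intro k hk
    induction k with
    | zero => exact hΛ0
    | succ k ih =>
      exact posDef_of_eq_sub_smul (hΔ (k + 1) (by omega) hk).posSemidef (ih (by omega))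
        (hxpos k hk).le (hΛrec k hk)
  set c : ℕ → ℝ := fun k => -(1 / 2) * log Λ.det + 1 / 2 * ∑ ℓ ∈ Finset.Ico k r,
    1 / x ℓ * log ((Λseq (ℓ + 1)).det / (Λseq ℓ).det) with hc
  have hY : ∀ k ≤ r, ∀ z : Fin k → Fin n → ℝ,
      Y k z = c k + 1 / 2 * ((Λseq k)⁻¹ *ᵥ (∑ i, z i + hvec) ⬝ᵥ (∑ i, z i + hvec)) := by
    intro k hk
    induction hk using Nat.decreasingInduction with
    | self =>
      intro z
      have := hΛ.log_rpow_mul_integral_exp_linear_sub_half_quadratic (∑ i, z i + hvec)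
      rw [Fintype.card_fin] at this
      rw [hYr, this, hΛr]
      simp only [hc, Finset.Ico_self, Finset.sum_empty, mul_zero, add_zero]
    | of_succ k hk ih =>
      intro z
      have hsnoc (w : Fin n → ℝ) : Y (k + 1) (Fin.snoc z w) = c (k + 1) +
          1 / 2 * ((Λseq (k + 1))⁻¹ *ᵥ ((∑ i, z i + hvec) + w) ⬝ᵥ ((∑ i, z i + hvec) + w)) := by
        rw [ih, Fin.sum_snoc, add_right_comm (∑ i, z i) w hvec]
      have := log_integral_exp_gaussian_step (hΔ (k + 1) (by omega) hk) (hΛpd k hk.le)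
        (hxpos k hk) (hΛrec k hk) (c (k + 1)) (∑ i, z i + hvec)
      rw [Fintype.card_fin] at this
      simp_rw [hYrec k hk, hsnoc, this]
      simp only [hc, Finset.sum_eq_sum_Ico_succ_bot hk]
      ring
  rw [hY 0 r.zero_le Fin.elim0, Finset.univ_eq_empty, Finset.sum_empty, zero_add]
  simp only [hc, Finset.range_eq_Ico]
  ring

/-- Corollary `closed_form_recur` of the paper.  Closed form of the
Ruelle-probability-cascade recursion for the spherical model.  Given
`0 = x₋₁ < x₀ < ⋯ < x_r = 1`, positive definite matrices `Δ₁, …, Δ_r`, an external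
field `h`, a positive definite matrix `Λ`, and the sequence `Λ_r = Λ`,
`Λ_k = Λ_{k+1} - x_k Δ_{k+1}` with `Λ₀` positive definite, the recursively defined
quantities `Y_k` satisfy
`Y₀ = -(1/2) log det Λ + (1/2)⟨Λ₀⁻¹ h, h⟩ + (1/2) ∑_{k<r} (1/x_k) log (det Λ_{k+1} / det Λ_k)`. -/
theorem stmt1 (n r : ℕ) (hn : 1 ≤ n) (hr : 1 ≤ r)
    (x : ℕ → ℝ) (hx0 : 0 < x 0) (hxmono : ∀ k < r, x k < x (k + 1)) (hxr : x r = 1)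
    (Δ : ℕ → Matrix (Fin n) (Fin n) ℝ) (hΔ : ∀ k, 1 ≤ k → k ≤ r → (Δ k).PosDef)
    (hvec : Fin n → ℝ)
    (Λ : Matrix (Fin n) (Fin n) ℝ) (hΛ : Λ.PosDef)
    (Λseq : ℕ → Matrix (Fin n) (Fin n) ℝ)
    (hΛr : Λseq r = Λ)
    (hΛrec : ∀ k < r, Λseq k = Λseq (k + 1) - x k • Δ (k + 1))
    (hΛ0 : (Λseq 0).PosDef)
    (Y : (k : ℕ) → (Fin k → (Fin n → ℝ)) → ℝ)
    (hYr : ∀ z : Fin r → (Fin n → ℝ),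
      Y r z = Real.log ((2 * Real.pi) ^ (-(n : ℝ) / 2) *
        ∫ ω : Fin n → ℝ,
          Real.exp ((ω ⬝ᵥ (∑ i, z i + hvec)) - (1 / 2) * (Λ.mulVec ω ⬝ᵥ ω))))
    (hYrec : ∀ k, k < r → ∀ z : Fin k → (Fin n → ℝ),
      Y k z = (1 / x k) * Real.log (((2 * Real.pi) ^ n * (Δ (k + 1)).det) ^ (-(1 : ℝ) / 2) *
        ∫ w : Fin n → ℝ,
          Real.exp (x k * Y (k + 1) (Fin.snoc z w)) *
            Real.exp (-(1 / 2) * ((Δ (k + 1))⁻¹.mulVec w ⬝ᵥ w)))) :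
    Y 0 Fin.elim0 = -(1 / 2) * Real.log Λ.det
        + (1 / 2) * ((Λseq 0)⁻¹.mulVec hvec ⬝ᵥ hvec)
        + (1 / 2) * ∑ k ∈ Finset.range r,
            (1 / x k) * Real.log ((Λseq (k + 1)).det / (Λseq k).det) :=
  stmt1_general n r x hx0 hxmono Δ hΔ hvec Λ hΛ Λseq hΛr hΛrec hΛ0 Y hYr hYrec
end

section
/- Fix n ≥ 1, r ≥ 1, real numbers 0 = x_{−1} < x₀ < x₁ < ⋯ < x_r = 1, symmetric positive semidefinite n×n real matrices Δ₁, …, Δ_r, and a vector h ∈ ℝⁿ. Let Q be an n×n symmetric positive semidefinite matrix with det Q = 0. Then the infimum over Λ ∈ L of (1/2)·tr(ΛQ) + F(Λ) equals −∞; that is, for every c ∈ ℝ there exists Λ ∈ L with (1/2)·tr(ΛQ) + F(Λ) < c. -/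
/-!
Let `B_k = 1 + ∑_{ℓ<k} x_ℓ Δ_{ℓ+1}` (`LamBase`), pick `v ≠ 0` with `Q v = 0` and take
`Λ = B_r + t v vᵀ`. Then `Λ_k = B_k + t v vᵀ`, the trace term does not depend on `t`, and by
the matrix determinant lemma `det Λ_k = det B_k (1 + t a_k)` with `a_k = vᵀ B_k⁻¹ v`.
The `B_k` increase, so the `a_k` decrease and every ratio term of `F`, as well as the quadratic
term, is at most its value at `t = 0`; meanwhile `-log det Λ` contains `-log (1 + t a_r) → -∞`.
-/

open MeasureTheory Matrix Real

/-- The sequence `Λ_k` defined by the downward recursion `Λ_r = Λ`,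
`Λ_k = Λ_{k+1} - x_k • Δ_{k+1}` for `0 ≤ k ≤ r-1`; in closed form
`Λ_k = Λ - ∑_{ℓ = k}^{r-1} x_ℓ • Δ_{ℓ+1}`. -/
noncomputable def LamSeq (n r : ℕ) (x : ℕ → ℝ) (Δ : ℕ → Matrix (Fin n) (Fin n) ℝ)
    (Λ : Matrix (Fin n) (Fin n) ℝ) (k : ℕ) : Matrix (Fin n) (Fin n) ℝ :=
  Λ - ∑ ℓ ∈ Finset.Ico k r, x ℓ • Δ (ℓ + 1)

/-- The set `L` of symmetric positive semidefinite matrices `Λ` with `Λ₀` positive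
definite. -/
def Lset (n r : ℕ) (x : ℕ → ℝ) (Δ : ℕ → Matrix (Fin n) (Fin n) ℝ) :
    Set (Matrix (Fin n) (Fin n) ℝ) :=
  {Λ | Λ.PosSemidef ∧ (LamSeq n r x Δ Λ 0).PosDef}

/-- The functional
`F(Λ) = (1/2)( -log det Λ + ⟨Λ₀⁻¹ h, h⟩ + ∑_{k<r} (1/x_k) log(det Λ_{k+1}/det Λ_k) )`. -/
noncomputable def Ffun (n r : ℕ) (x : ℕ → ℝ) (Δ : ℕ → Matrix (Fin n) (Fin n) ℝ)
    (hvec : Fin n → ℝ) (Λ : Matrix (Fin n) (Fin n) ℝ) : ℝ :=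
  (1 / 2) * (-Real.log Λ.det + ((LamSeq n r x Δ Λ 0)⁻¹.mulVec hvec ⬝ᵥ hvec)
    + ∑ k ∈ Finset.range r,
        (1 / x k) * Real.log ((LamSeq n r x Δ Λ (k + 1)).det / (LamSeq n r x Δ Λ k).det))

namespace Matrix

variable {ι : Type*} [Fintype ι] [DecidableEq ι]

theorem det_add_vecMulVec {R : Type*} [CommRing R] {A : Matrix ι ι R} (hA : IsUnit A.det)
    (u v : ι → R) : (A + vecMulVec u v).det = A.det * (1 + v ⬝ᵥ A⁻¹ *ᵥ u) := by
  rw [vecMulVec_eq Unit, det_add_replicateCol_mul_replicateRow hA, ← replicateRow_vecMul]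
  congr 1
  rw [det_unique, add_apply, one_apply_eq, replicateRow_mul_replicateCol_apply,
    dotProduct_mulVec]

theorem det_add_smul_vecMulVec_self {R : Type*} [CommRing R] {A : Matrix ι ι R}
    (hA : IsUnit A.det) (t : R) (v : ι → R) :
    (A + t • vecMulVec v v).det = A.det * (1 + t * (A⁻¹ *ᵥ v ⬝ᵥ v)) := by
  rw [← smul_vecMulVec, det_add_vecMulVec hA, mulVec_smul, dotProduct_smul, smul_eq_mul,
    dotProduct_comm]

theorem PosDef.inv_mulVec_dotProduct_antitone {B C : Matrix ι ι ℝ} (hB : B.PosDef)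
    (hC : C.PosDef) (hBC : (C - B).PosSemidef) (v : ι → ℝ) :
    C⁻¹ *ᵥ v ⬝ᵥ v ≤ B⁻¹ *ᵥ v ⬝ᵥ v := by
  set u := B⁻¹ *ᵥ v
  set w := C⁻¹ *ᵥ v
  have hBu : B *ᵥ u = v := by
    rw [mulVec_mulVec, mul_nonsing_inv _ hB.det_pos.ne'.isUnit, one_mulVec]
  have hCw : C *ᵥ w = v := by
    rw [mulVec_mulVec, mul_nonsing_inv _ hC.det_pos.ne'.isUnit, one_mulVec]
  have hBsymm : u ⬝ᵥ B *ᵥ w = v ⬝ᵥ w := by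
    rw [dotProduct_mulVec, ← mulVec_transpose, (isHermitian_iff_isSymm.1 hB.isHermitian).eq,
      hBu]
  -- `wᵀBw ≤ wᵀCw = vᵀw` and `0 ≤ (u - w)ᵀB(u - w) = vᵀu - 2 vᵀw + wᵀBw`
  have hCB := hBC.dotProduct_mulVec_nonneg w
  have hB_uw := hB.posSemidef.dotProduct_mulVec_nonneg (u - w)
  simp only [star_trivial, sub_mulVec, mulVec_sub, dotProduct_sub, sub_dotProduct, hCw, hBu,
    hBsymm] at hCB hB_uw
  linarith [dotProduct_comm u v, dotProduct_comm w v]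

end Matrix

noncomputable def LamBase (n : ℕ) (x : ℕ → ℝ) (Δ : ℕ → Matrix (Fin n) (Fin n) ℝ)
    (k : ℕ) : Matrix (Fin n) (Fin n) ℝ :=
  1 + ∑ ℓ ∈ Finset.range k, x ℓ • Δ (ℓ + 1)

section LamBase

variable {n r : ℕ} {x : ℕ → ℝ} {Δ : ℕ → Matrix (Fin n) (Fin n) ℝ}

theorem LamSeq_LamBase_add (P : Matrix (Fin n) (Fin n) ℝ) {k : ℕ} (hk : k ≤ r) :
    LamSeq n r x Δ (LamBase n x Δ r + P) k = LamBase n x Δ k + P := by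
  rw [LamSeq, LamBase, LamBase, Finset.range_eq_Ico, Finset.range_eq_Ico,
    ← Finset.sum_Ico_consecutive _ (Nat.zero_le k) hk]
  abel

theorem Ffun_LamBase_add (h : Fin n → ℝ) (P : Matrix (Fin n) (Fin n) ℝ) :
    Ffun n r x Δ h (LamBase n x Δ r + P) = (1 / 2) * (-log (LamBase n x Δ r + P).det
      + (LamBase n x Δ 0 + P)⁻¹ *ᵥ h ⬝ᵥ h + ∑ k ∈ Finset.range r,
        (1 / x k) * log ((LamBase n x Δ (k + 1) + P).det / (LamBase n x Δ k + P).det)) := by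
  rw [Ffun, LamSeq_LamBase_add P (Nat.zero_le r)]
  congr 2
  refine Finset.sum_congr rfl fun k hk => ?_
  have hk := Finset.mem_range.1 hk
  rw [LamSeq_LamBase_add P hk, LamSeq_LamBase_add P hk.le]

theorem LamBase_succ_sub (k : ℕ) :
    LamBase n x Δ (k + 1) - LamBase n x Δ k = x k • Δ (k + 1) := by
  rw [LamBase, LamBase, Finset.sum_range_succ]
  abel

theorem posDef_LamBase (hx : ∀ k < r, 0 ≤ x k) (hΔ : ∀ k < r, (Δ (k + 1)).PosSemidef)
    {k : ℕ} (hk : k ≤ r) : (LamBase n x Δ k).PosDef :=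
  PosDef.one.add_posSemidef <| posSemidef_sum _ fun ℓ hℓ =>
    have hℓr : ℓ < r := (Finset.mem_range.1 hℓ).trans_le hk
    (hΔ ℓ hℓr).smul (hx ℓ hℓr)

theorem LamBase_add_mem_Lset (hx : ∀ k < r, 0 ≤ x k) (hΔ : ∀ k < r, (Δ (k + 1)).PosSemidef)
    {P : Matrix (Fin n) (Fin n) ℝ} (hP : P.PosSemidef) : LamBase n x Δ r + P ∈ Lset n r x Δ :=
  ⟨(posDef_LamBase hx hΔ le_rfl).posSemidef.add hP, by
    rw [LamSeq_LamBase_add P (Nat.zero_le r)]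
    exact (posDef_LamBase hx hΔ (Nat.zero_le r)).add_posSemidef hP⟩

theorem inv_LamBase_mulVec_dotProduct_antitone (hx : ∀ k < r, 0 ≤ x k)
    (hΔ : ∀ k < r, (Δ (k + 1)).PosSemidef) (v : Fin n → ℝ) {k : ℕ} (hk : k < r) :
    (LamBase n x Δ (k + 1))⁻¹ *ᵥ v ⬝ᵥ v ≤ (LamBase n x Δ k)⁻¹ *ᵥ v ⬝ᵥ v :=
  (posDef_LamBase hx hΔ hk.le).inv_mulVec_dotProduct_antitone (posDef_LamBase hx hΔ hk)
    (by rw [LamBase_succ_sub]; exact (hΔ k hk).smul (hx k hk)) v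

theorem objective_LamBase_add_smul_vecMulVec_le (hx : ∀ k < r, 0 ≤ x k)
    (hΔ : ∀ k < r, (Δ (k + 1)).PosSemidef) (h : Fin n → ℝ) {Q : Matrix (Fin n) (Fin n) ℝ}
    {v : Fin n → ℝ} (hQv : Q *ᵥ v = 0) {t : ℝ} (ht : 0 ≤ t) :
    (1 / 2) * ((LamBase n x Δ r + t • vecMulVec v v) * Q).trace
        + Ffun n r x Δ h (LamBase n x Δ r + t • vecMulVec v v)
      ≤ (1 / 2) * (LamBase n x Δ r * Q).trace + Ffun n r x Δ h (LamBase n x Δ r)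
        - (1 / 2) * log (1 + t * ((LamBase n x Δ r)⁻¹ *ᵥ v ⬝ᵥ v)) := by
  set B := LamBase n x Δ
  set a : ℕ → ℝ := fun k => (B k)⁻¹ *ᵥ v ⬝ᵥ v
  have hB : ∀ {k}, k ≤ r → (B k).PosDef := posDef_LamBase hx hΔ
  have ha : ∀ {k}, k ≤ r → 0 ≤ a k := fun hk => by
    simpa [a, dotProduct_comm] using (hB hk).inv.posSemidef.dotProduct_mulVec_nonneg v
  have hfac : ∀ {k}, k ≤ r → 0 < 1 + t * a k := fun hk =>
    add_pos_of_pos_of_nonneg one_pos (mul_nonneg ht (ha hk))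
  have hdet : ∀ {k}, k ≤ r → (B k + t • vecMulVec v v).det = (B k).det * (1 + t * a k) :=
    fun hk => det_add_smul_vecMulVec_self (hB hk).det_pos.ne'.isUnit t v
  have htrace : ((B r + t • vecMulVec v v) * Q).trace = (B r * Q).trace := by
    rw [add_mul, trace_add, smul_mul, trace_smul, trace_mul_comm (vecMulVec v v), mul_vecMulVec,
      hQv, zero_vecMulVec, trace_zero, smul_zero, add_zero]
  have hlogdet : log (B r + t • vecMulVec v v).det = log (B r).det + log (1 + t * a r) := by
    rw [hdet le_rfl, log_mul (hB le_rfl).det_pos.ne' (hfac le_rfl).ne']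
  have hquad : (B 0 + t • vecMulVec v v)⁻¹ *ᵥ h ⬝ᵥ h ≤ (B 0)⁻¹ *ᵥ h ⬝ᵥ h :=
    (hB (Nat.zero_le r)).inv_mulVec_dotProduct_antitone
      ((hB (Nat.zero_le r)).add_posSemidef (posSemidef_vecMulVec_self_star v |>.smul ht))
      (by simpa using posSemidef_vecMulVec_self_star v |>.smul ht) h
  have hratio : ∀ k < r, (1 / x k) * log ((B (k + 1) + t • vecMulVec v v).det
        / (B k + t • vecMulVec v v).det) ≤ (1 / x k) * log ((B (k + 1)).det / (B k).det) := by
    intro k hk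
    have hf : 1 + t * a (k + 1) ≤ 1 + t * a k := by
      gcongr
      exact inv_LamBase_mulVec_dotProduct_antitone hx hΔ v hk
    have hdet_ratio : 0 < (B (k + 1)).det / (B k).det :=
      div_pos (hB hk).det_pos (hB hk.le).det_pos
    rw [hdet hk, hdet hk.le, mul_div_mul_comm]
    gcongr
    · exact one_div_nonneg.2 (hx k hk)
    · exact mul_pos hdet_ratio (div_pos (hfac hk) (hfac hk.le))
    · exact mul_le_of_le_one_right hdet_ratio.le (div_le_one_of_le₀ hf (hfac hk.le).le)
  have hsum := Finset.sum_le_sum fun k hk => hratio k (Finset.mem_range.1 hk)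
  have hFfun₀ := Ffun_LamBase_add (r := r) (x := x) (Δ := Δ) h 0
  simp only [add_zero] at hFfun₀
  rw [htrace, Ffun_LamBase_add, hFfun₀, hlogdet]
  linarith

end LamBase

theorem stmt2_general (n r : ℕ)
    (x : ℕ → ℝ) (hx0 : 0 < x 0) (hxmono : ∀ k < r, x k < x (k + 1))
    (Δ : ℕ → Matrix (Fin n) (Fin n) ℝ) (hΔ : ∀ k, 1 ≤ k → k ≤ r → (Δ k).PosSemidef)
    (hvec : Fin n → ℝ)
    (Q : Matrix (Fin n) (Fin n) ℝ) (hQdet : Q.det = 0) :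
    ∀ c : ℝ, ∃ Λ ∈ Lset n r x Δ,
      (1 / 2) * (Λ * Q).trace + Ffun n r x Δ hvec Λ < c := by
  intro c
  have hx : ∀ k < r, 0 ≤ x k := by
    intro k hk
    induction k with
    | zero => exact hx0.le
    | succ k ih => exact (ih (by omega)).trans (hxmono k (by omega)).le
  have hΔ' : ∀ k < r, (Δ (k + 1)).PosSemidef := fun k hk => hΔ (k + 1) (by omega) hk
  obtain ⟨v, hv, hQv⟩ := exists_mulVec_eq_zero_iff.2 hQdet
  set B := LamBase n x Δ r
  set C := (1 / 2) * (B * Q).trace + Ffun n r x Δ hvec B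
  set a := B⁻¹ *ᵥ v ⬝ᵥ v
  have ha : 0 < a := by
    simpa [a, dotProduct_comm] using (posDef_LamBase hx hΔ' le_rfl).inv.dotProduct_mulVec_pos hv
  set t := exp (2 * (C - c)) / a
  have ht : 0 ≤ t := by positivity
  refine ⟨B + t • vecMulVec v v,
    LamBase_add_mem_Lset hx hΔ' ((posSemidef_vecMulVec_self_star v).smul ht),
    (objective_LamBase_add_smul_vecMulVec_le hx hΔ' hvec hQv ht).trans_lt ?_⟩
  change C - 1 / 2 * log (1 + t * a) < c
  have hlog : 2 * (C - c) < log (1 + t * a) := by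
    rw [div_mul_cancel₀ _ ha.ne', lt_log_iff_exp_lt (by positivity)]
    linarith
  linarith

/-- Lemma `minimizer`, degenerate case.  If `det Q = 0` then
`inf_{Λ ∈ L} ( (1/2) tr(ΛQ) + F(Λ) ) = -∞`. -/
theorem stmt2 (n r : ℕ) (hn : 1 ≤ n) (hr : 1 ≤ r)
    (x : ℕ → ℝ) (hx0 : 0 < x 0) (hxmono : ∀ k < r, x k < x (k + 1)) (hxr : x r = 1)
    (Δ : ℕ → Matrix (Fin n) (Fin n) ℝ) (hΔ : ∀ k, 1 ≤ k → k ≤ r → (Δ k).PosSemidef)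
    (hvec : Fin n → ℝ)
    (Q : Matrix (Fin n) (Fin n) ℝ) (hQ : Q.PosSemidef) (hQdet : Q.det = 0) :
    ∀ c : ℝ, ∃ Λ ∈ Lset n r x Δ,
      (1 / 2) * (Λ * Q).trace + Ffun n r x Δ hvec Λ < c :=
  stmt2_general n r x hx0 hxmono Δ hΔ hvec Q hQdet
end

section
/- Fix n ≥ 1, r ≥ 1, real numbers 0 = x_{−1} < x₀ < x₁ < ⋯ < x_r = 1, symmetric positive semidefinite n×n real matrices Δ₁, …, Δ_r, a vector h ∈ ℝⁿ, and an n×n symmetric matrix Q. Then L is a convex subset of the symmetric n×n matrices and the function Λ ↦ (1/2)·tr(ΛQ) + F(Λ) is convex on L. -/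
/-!
Summation by parts turns `2F(Λ)` into a function of `A = Λ₀ = Λ - ∑ₗ xₗ Δₗ₊₁`, which is affine
in `Λ`:
`⟨A⁻¹ h, h⟩ - log det A + ∑ₖ (1/xₖ - 1/xₖ₊₁) (log det (A + Tₖ) - log det A)`,
with `Tₖ = ∑_{ℓ ≤ k} xℓ Δℓ₊₁ ⪰ 0` and nonnegative weights since `x` increases.
Each summand is convex on positive definite matrices because it lies above its tangent planes:
for `⟨A⁻¹ h, h⟩` by completing the square; for `-log det A` and `log det (A + S) - log det A`
the gap to the tangent plane at `W` is the log-det divergence `D(A, W)`, resp.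
`D(A, W) - D(A + S, W + S)`. Both are nonnegative: differentiate along `t ↦ W + t (A - W)`,
resp. `t ↦ (A + t S, W + t S)`; the derivatives are traces of products of positive
semidefinite matrices.
-/

open MeasureTheory Matrix Real

section ConvexFunctions

variable {𝕜 E β ι : Type*}

theorem convexOn_sum [Semiring 𝕜] [PartialOrder 𝕜] [AddCommMonoid E] [SMul 𝕜 E]
    [AddCommMonoid β] [PartialOrder β] [IsOrderedAddMonoid β] [Module 𝕜 β]
    {s : Set E} (hs : Convex 𝕜 s) (t : Finset ι) {f : ι → E → β}
    (hf : ∀ i ∈ t, ConvexOn 𝕜 s (f i)) : ConvexOn 𝕜 s fun x => ∑ i ∈ t, f i x := by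
  classical
  induction t using Finset.induction_on with
  | empty => simpa using convexOn_const (0 : β) hs
  | insert i t hi ih =>
    simp only [Finset.sum_insert hi]
    exact (hf i (t.mem_insert_self i)).add (ih fun j hj => hf j (Finset.mem_insert_of_mem hj))

theorem convexOn_of_forall_exists_linearMap_le [Field 𝕜] [LinearOrder 𝕜] [IsStrictOrderedRing 𝕜]
    [AddCommGroup E] [Module 𝕜 E] {s : Set E} {f : E → 𝕜} (hs : Convex 𝕜 s)
    (h : ∀ w ∈ s, ∃ ℓ : E →ₗ[𝕜] 𝕜, ∀ y ∈ s, f w + ℓ (y - w) ≤ f y) : ConvexOn 𝕜 s f := by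
  refine ⟨hs, fun y hy z hz a b ha hb hab => ?_⟩
  set w := a • y + b • z
  obtain ⟨ℓ, hℓ⟩ := h w (hs hy hz ha hb hab)
  have hbalance : a * ℓ (y - w) + b * ℓ (z - w) = 0 := by
    have : a • (y - w) + b • (z - w) = 0 := by
      rw [smul_sub, smul_sub, sub_add_sub_comm, ← add_smul, hab, one_smul, sub_self]
    simpa using congrArg ℓ this
  calc f w = a * (f w + ℓ (y - w)) + b * (f w + ℓ (z - w)) := by
        linear_combination (f w) * hab.symm - hbalance
    _ ≤ a • f y + b • f z := by
        simp only [smul_eq_mul]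
        gcongr
        exacts [hℓ y hy, hℓ z hz]

theorem le_of_hasDerivAt_nonneg {f f' : ℝ → ℝ} {a b : ℝ} (hab : a ≤ b)
    (hf : ∀ t ∈ Set.Icc a b, HasDerivAt f (f' t) t) (hf' : ∀ t ∈ Set.Ioo a b, 0 ≤ f' t) :
    f a ≤ f b := by
  refine monotoneOn_of_hasDerivWithinAt_nonneg (convex_Icc a b)
    (fun t ht => (hf t ht).continuousAt.continuousWithinAt)
    (fun t ht => (hf t (interior_subset ht)).hasDerivWithinAt) ?_ (Set.left_mem_Icc.2 hab)
    (Set.right_mem_Icc.2 hab) hab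
  simpa only [interior_Icc] using hf'

end ConvexFunctions

section PosDefCone

variable {m : Type*} [Fintype m] [DecidableEq m]

omit [DecidableEq m] in
theorem convex_setOf_posDef : Convex ℝ {A : Matrix m m ℝ | A.PosDef} := by
  intro A hA B hB a b ha hb hab
  refine posDef_iff_dotProduct_mulVec.2
    ⟨((hA.posSemidef.smul ha).add (hB.posSemidef.smul hb)).1, fun v hv => ?_⟩
  simpa [add_mulVec, smul_mulVec, dotProduct_add] using
    convex_Ioi (0 : ℝ) (hA.dotProduct_mulVec_pos hv) (hB.dotProduct_mulVec_pos hv) ha hb hab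

omit [DecidableEq m] in
theorem Matrix.PosSemidef.mul_mul_of_isHermitian {P X : Matrix m m ℝ} (hP : P.PosSemidef)
    (hX : X.IsHermitian) : (X * P * X).PosSemidef := by
  simpa only [hX.eq] using hP.conjTranspose_mul_mul_same X

theorem trace_mul_nonneg_of_posSemidef {A B : Matrix m m ℝ} (hA : A.PosSemidef)
    (hB : B.PosSemidef) : 0 ≤ (A * B).trace := by
  obtain ⟨C, rfl⟩ : ∃ C : Matrix m m ℝ, A = star C * C := by
    open scoped MatrixOrder Matrix.Norms.L2Operator in
    exact CStarAlgebra.nonneg_iff_eq_star_mul_self.mp hA.nonneg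
  rw [Matrix.mul_assoc, trace_mul_comm]
  exact (hB.mul_mul_conjTranspose_same C).trace_nonneg

theorem inv_sub_inv_add_inv_mul_sub_mul_inv {A W : Matrix m m ℝ} (hA : IsUnit A)
    (hW : IsUnit W) :
    A⁻¹ - W⁻¹ + W⁻¹ * (A - W) * W⁻¹ = (A⁻¹ - W⁻¹) * A * (A⁻¹ - W⁻¹) := by
  rw [isUnit_iff_isUnit_det] at hA hW
  simp only [Matrix.sub_mul, Matrix.mul_sub, Matrix.mul_assoc, mul_nonsing_inv _ hA,
    nonsing_inv_mul _ hA, mul_nonsing_inv _ hW, Matrix.mul_one, Matrix.one_mul]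
  abel

theorem two_mul_dotProduct_sub_le_inv_mulVec_dotProduct {A : Matrix m m ℝ} (hA : A.PosDef)
    (v y : m → ℝ) : 2 * (v ⬝ᵥ y) - y ⬝ᵥ (A *ᵥ y) ≤ (A⁻¹ *ᵥ v) ⬝ᵥ v := by
  have hdet : IsUnit A.det := (isUnit_iff_isUnit_det A).1 hA.isUnit
  have hsymm : Aᵀ = A := by simpa using hA.1.eq
  have hcross : (A⁻¹ *ᵥ v) ⬝ᵥ (A *ᵥ y) = v ⬝ᵥ y := by
    rw [dotProduct_mulVec, ← mulVec_transpose, hsymm, mulVec_mulVec, mul_nonsing_inv _ hdet,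
      one_mulVec]
  have hsq := hA.posSemidef.dotProduct_mulVec_nonneg (A⁻¹ *ᵥ v - y)
  rw [star_trivial, mulVec_sub, mulVec_mulVec, mul_nonsing_inv _ hdet, one_mulVec] at hsq
  simp only [sub_dotProduct, dotProduct_sub, hcross] at hsq
  rw [dotProduct_comm y v] at hsq
  linarith

end PosDefCone

section Derivatives

variable {m : Type*} [Fintype m] [DecidableEq m]

theorem hasDerivAt_det_add_smul (M N : Matrix m m ℝ) (t₀ : ℝ) (h : IsUnit (M + t₀ • N)) :
    HasDerivAt (fun t : ℝ => (M + t • N).det)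
      ((M + t₀ • N).det * ((M + t₀ • N)⁻¹ * N).trace) t₀ := by
  set M₀ := M + t₀ • N
  set C := M₀⁻¹ * N
  set p := (1 + (Polynomial.X : Polynomial ℝ) • C.map Polynomial.C).det
  have hfactor : ∀ t : ℝ, (M + t • N).det = M₀.det * p.eval (t - t₀) := by
    intro t
    have : M + t • N = M₀ * (1 + (t - t₀) • C) := by
      rw [Matrix.mul_add, Matrix.mul_one, Matrix.mul_smul, ← Matrix.mul_assoc,
        mul_nonsing_inv _ ((isUnit_iff_isUnit_det _).1 h), Matrix.one_mul, sub_smul]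
      simp only [M₀]
      abel
    rw [this, det_mul]
    simp [p, eval_det, Polynomial.eval_mul_X, ← smul_eq_mul_diagonal]
  have hp := (p.hasDerivAt (t₀ - t₀)).comp_sub_const t₀ t₀
  rw [sub_self, derivative_det_one_add_X_smul] at hp
  simp_rw [hfactor]
  exact hp.const_mul _

theorem hasDerivAt_log_det_add_smul (M N : Matrix m m ℝ) (t₀ : ℝ) (h : 0 < (M + t₀ • N).det) :
    HasDerivAt (fun t : ℝ => Real.log (M + t • N).det) ((M + t₀ • N)⁻¹ * N).trace t₀ := by
  have hu : IsUnit (M + t₀ • N) := (isUnit_iff_isUnit_det _).2 (isUnit_iff_ne_zero.2 h.ne')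
  convert (hasDerivAt_det_add_smul M N t₀ hu).log h.ne' using 1
  field_simp

/- The operator norm is only needed to quote `hasFDerivAt_ringInverse`; it induces the usual
topology, so the final `rfl` identifies the two instance paths. -/
attribute [local instance] Matrix.linftyOpNormedRing Matrix.linftyOpNormedAlgebra in
theorem hasDerivAt_trace_inv_add_smul_mul (M N C : Matrix m m ℝ) (t₀ : ℝ)
    (h : IsUnit (M + t₀ • N)) :
    HasDerivAt (fun t : ℝ => ((M + t • N)⁻¹ * C).trace)
      (-((M + t₀ • N)⁻¹ * N * (M + t₀ • N)⁻¹ * C).trace) t₀ := by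
  have hline : HasDerivAt (fun t : ℝ => M + t • N) N t₀ := by
    have := ((hasDerivAt_id t₀).smul_const N).const_add M
    simp only [id, one_smul] at this
    exact this
  have hinv := (hasFDerivAt_ringInverse (𝕜 := ℝ) h.unit).comp_hasDerivAt t₀ hline
  have htrace := (LinearMap.toContinuousLinearMap
    (traceLinearMap m ℝ ℝ ∘ₗ LinearMap.mulRight ℝ C)).hasFDerivAt.comp_hasDerivAt t₀ hinv
  have hunit : (M + t₀ • N)⁻¹ = ↑h.unit⁻¹ := by simp [nonsing_inv_eq_ringInverse]
  rw [← trace_neg, ← Matrix.neg_mul, hunit]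
  simp only [nonsing_inv_eq_ringInverse]
  exact htrace.congr_deriv rfl

end Derivatives

section LogDetDivergence

variable {m : Type*} [Fintype m] [DecidableEq m]

/-- The Bregman divergence of `-log det` (twice the Kullback–Leibler divergence between centred
Gaussians with covariances `A` and `W`). -/
noncomputable def logDetDivergence (A W : Matrix m m ℝ) : ℝ :=
  (W⁻¹ * (A - W)).trace - (Real.log A.det - Real.log W.det)

theorem logDetDivergence_nonneg {A W : Matrix m m ℝ} (hA : A.PosDef) (hW : W.PosDef) :
    0 ≤ logDetDivergence A W := by
  set N := A - W
  have hpd : ∀ t ∈ Set.Icc (0 : ℝ) 1, (W + t • N).PosDef := fun t ht => by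
    have : W + t • N = (1 - t) • W + t • A := by simp only [N]; module
    rw [this]
    exact convex_setOf_posDef hW hA (by linarith [ht.2]) ht.1 (by ring)
  have hmono := le_of_hasDerivAt_nonneg zero_le_one
    (f := fun t => t * (W⁻¹ * N).trace - Real.log (W + t • N).det)
    (fun t ht => ((hasDerivAt_id t).mul_const _).sub
      (hasDerivAt_log_det_add_smul W N t (hpd t ht).det_pos)) fun t ht => by
    have hWt := hpd t (Set.Ioo_subset_Icc_self ht)
    have hdiff : W⁻¹ - (W + t • N)⁻¹ = t • (W⁻¹ * N * (W + t • N)⁻¹) := by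
      rw [Matrix.inv_sub_inv ⟨fun _ => hWt.isUnit, fun _ => hW.isUnit⟩]
      simp
    have : 1 * (W⁻¹ * N).trace - ((W + t • N)⁻¹ * N).trace
        = t * (W⁻¹ * (N * (W + t • N)⁻¹ * N)).trace := by
      rw [one_mul, ← trace_sub, ← Matrix.sub_mul, hdiff, Matrix.smul_mul, trace_smul, smul_eq_mul,
        Matrix.mul_assoc, Matrix.mul_assoc, Matrix.mul_assoc]
    rw [this]
    exact mul_nonneg ht.1.le (trace_mul_nonneg_of_posSemidef hW.inv.posSemidef
      (hWt.inv.posSemidef.mul_mul_of_isHermitian (hA.1.sub hW.1)))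
  simpa [logDetDivergence, N] using hmono

theorem logDetDivergence_add_le {A W S : Matrix m m ℝ} (hA : A.PosDef) (hW : W.PosDef)
    (hS : S.PosSemidef) : logDetDivergence (A + S) (W + S) ≤ logDetDivergence A W := by
  set N := A - W
  have hApd : ∀ t ∈ Set.Icc (0 : ℝ) 1, (A + t • S).PosDef :=
    fun t ht => hA.add_posSemidef (hS.smul ht.1)
  have hWpd : ∀ t ∈ Set.Icc (0 : ℝ) 1, (W + t • S).PosDef :=
    fun t ht => hW.add_posSemidef (hS.smul ht.1)
  have hmono := le_of_hasDerivAt_nonneg zero_le_one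
    (f := fun t => Real.log (A + t • S).det - Real.log (W + t • S).det
      - ((W + t • S)⁻¹ * N).trace)
    (fun t ht => ((hasDerivAt_log_det_add_smul A S t (hApd t ht).det_pos).sub
      (hasDerivAt_log_det_add_smul W S t (hWpd t ht).det_pos)).sub
      (hasDerivAt_trace_inv_add_smul_mul W S N t (hWpd t ht).isUnit)) fun t ht => by
    have hAt := hApd t (Set.Ioo_subset_Icc_self ht)
    have hWt := hWpd t (Set.Ioo_subset_Icc_self ht)
    have hN : N = (A + t • S) - (W + t • S) := by simp only [N]; abel
    have hX : ((A + t • S)⁻¹ - (W + t • S)⁻¹).IsHermitian := hAt.inv.1.sub hWt.inv.1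
    have : ((A + t • S)⁻¹ * S).trace - ((W + t • S)⁻¹ * S).trace
          - -((W + t • S)⁻¹ * S * (W + t • S)⁻¹ * N).trace
        = (S * (((A + t • S)⁻¹ - (W + t • S)⁻¹) * (A + t • S)
            * ((A + t • S)⁻¹ - (W + t • S)⁻¹))).trace := by
      rw [← inv_sub_inv_add_inv_mul_sub_mul_inv hAt.isUnit hWt.isUnit, ← hN]
      simp only [Matrix.mul_add, Matrix.mul_sub, trace_add, trace_sub]
      rw [trace_mul_comm S, trace_mul_comm S, sub_neg_eq_add]
      congr 1
      rw [Matrix.mul_assoc, Matrix.mul_assoc, trace_mul_comm, Matrix.mul_assoc, Matrix.mul_assoc]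
    rw [this]
    exact trace_mul_nonneg_of_posSemidef hS (hAt.posSemidef.mul_mul_of_isHermitian hX)
  simp only [zero_smul, add_zero, one_smul] at hmono
  simp only [logDetDivergence, add_sub_add_right_eq_sub]
  linarith

theorem convexOn_neg_log_det :
    ConvexOn ℝ {A : Matrix m m ℝ | A.PosDef} fun A => -Real.log A.det := by
  refine convexOn_of_forall_exists_linearMap_le convex_setOf_posDef fun W hW =>
    ⟨-(traceLinearMap m ℝ ℝ ∘ₗ LinearMap.mulLeft ℝ W⁻¹), fun A hA => ?_⟩
  have := logDetDivergence_nonneg hA hW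
  simp only [logDetDivergence] at this
  simp only [LinearMap.neg_apply, LinearMap.comp_apply, LinearMap.mulLeft_apply,
    traceLinearMap_apply]
  linarith

theorem convexOn_log_det_add_sub_log_det {S : Matrix m m ℝ} (hS : S.PosSemidef) :
    ConvexOn ℝ {A : Matrix m m ℝ | A.PosDef} fun A => Real.log (A + S).det - Real.log A.det := by
  refine convexOn_of_forall_exists_linearMap_le convex_setOf_posDef fun W hW =>
    ⟨traceLinearMap m ℝ ℝ ∘ₗ LinearMap.mulLeft ℝ ((W + S)⁻¹ - W⁻¹), fun A hA => ?_⟩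
  have := logDetDivergence_add_le hA hW hS
  simp only [logDetDivergence, add_sub_add_right_eq_sub] at this
  simp only [LinearMap.comp_apply, LinearMap.mulLeft_apply, traceLinearMap_apply,
    Matrix.sub_mul, trace_sub]
  linarith

theorem convexOn_inv_mulVec_dotProduct (v : m → ℝ) :
    ConvexOn ℝ {A : Matrix m m ℝ | A.PosDef} fun A => (A⁻¹ *ᵥ v) ⬝ᵥ v := by
  refine convexOn_of_forall_exists_linearMap_le convex_setOf_posDef fun W hW => ?_
  set y := W⁻¹ *ᵥ v
  have hWy : W *ᵥ y = v := by
    rw [mulVec_mulVec, mul_nonsing_inv _ ((isUnit_iff_isUnit_det W).1 hW.isUnit), one_mulVec]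
  let ℓ : Matrix m m ℝ →ₗ[ℝ] ℝ :=
    { toFun := fun X => -(y ⬝ᵥ (X *ᵥ y))
      map_add' := fun X Y => by simp only [add_mulVec, dotProduct_add]; ring
      map_smul' := fun c X => by simp [smul_mulVec] }
  refine ⟨ℓ, fun A hA => ?_⟩
  have := two_mul_dotProduct_sub_le_inv_mulVec_dotProduct hA v y
  simp only [ℓ, LinearMap.coe_mk, AddHom.coe_mk, sub_mulVec, dotProduct_sub, hWy]
  rw [dotProduct_comm v y] at this
  linarith

end LogDetDivergence

theorem sum_range_mul_sub_eq (u L : ℕ → ℝ) (r : ℕ) :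
    ∑ k ∈ Finset.range r, u k * (L (k + 1) - L k)
      = ∑ k ∈ Finset.range r, (u k - u (k + 1)) * (L (k + 1) - L 0) + u r * (L r - L 0) := by
  induction r with
  | zero => simp
  | succ r ih =>
    rw [Finset.sum_range_succ, Finset.sum_range_succ, ih]
    ring

theorem pos_of_pos_of_le_succ {x : ℕ → ℝ} {r : ℕ} (hx0 : 0 < x 0)
    (hmono : ∀ k < r, x k ≤ x (k + 1)) : ∀ k ≤ r, 0 < x k := by
  intro k
  induction k with
  | zero => exact fun _ => hx0
  | succ k ih => exact fun hk => (ih (by omega)).trans_le (hmono k (by omega))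

/-- Twice `F`, as a function of `A = Λ₀` after summation by parts. -/
noncomputable def FfunOfLamSeqZero (n r : ℕ) (x : ℕ → ℝ) (Δ : ℕ → Matrix (Fin n) (Fin n) ℝ)
    (hvec : Fin n → ℝ) (A : Matrix (Fin n) (Fin n) ℝ) : ℝ :=
  -Real.log A.det + (A⁻¹ *ᵥ hvec) ⬝ᵥ hvec
    + ∑ k ∈ Finset.range r, ((x k)⁻¹ - (x (k + 1))⁻¹) *
        (Real.log (A + ∑ ℓ ∈ Finset.range (k + 1), x ℓ • Δ (ℓ + 1)).det - Real.log A.det)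

section LamSeq

variable {n r : ℕ} {x : ℕ → ℝ} {Δ : ℕ → Matrix (Fin n) (Fin n) ℝ}

theorem LamSeq_self (Λ : Matrix (Fin n) (Fin n) ℝ) : LamSeq n r x Δ Λ r = Λ := by
  simp [LamSeq]

theorem LamSeq_eq_add (Λ : Matrix (Fin n) (Fin n) ℝ) {k : ℕ} (hk : k ≤ r) :
    LamSeq n r x Δ Λ k = LamSeq n r x Δ Λ 0 + ∑ ℓ ∈ Finset.range k, x ℓ • Δ (ℓ + 1) := by
  rw [LamSeq, LamSeq, Finset.range_eq_Ico, ← Finset.sum_Ico_consecutive _ (Nat.zero_le k) hk]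
  abel

theorem posSemidef_sum_range_smul (hx : ∀ k < r, 0 ≤ x k)
    (hΔ : ∀ k, 1 ≤ k → k ≤ r → (Δ k).PosSemidef) {k : ℕ} (hk : k ≤ r) :
    (∑ ℓ ∈ Finset.range k, x ℓ • Δ (ℓ + 1)).PosSemidef :=
  posSemidef_sum _ fun ℓ hℓ => by
    have := Finset.mem_range.1 hℓ
    exact (hΔ (ℓ + 1) (by omega) (by omega)).smul (hx ℓ (by omega))

theorem convex_Lset : Convex ℝ (Lset n r x Δ) := by
  intro Λ hΛ M hM a b ha hb hab
  refine ⟨(hΛ.1.smul ha).add (hM.1.smul hb), ?_⟩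
  have : LamSeq n r x Δ (a • Λ + b • M) 0 = a • LamSeq n r x Δ Λ 0 + b • LamSeq n r x Δ M 0 := by
    simp only [LamSeq, smul_sub, sub_add_sub_comm, ← add_smul, hab, one_smul]
  rw [this]
  exact convex_setOf_posDef hΛ.2 hM.2 ha hb hab

theorem Ffun_eq_FfunOfLamSeqZero (hx : ∀ k < r, 0 ≤ x k) (hxr : x r = 1)
    (hΔ : ∀ k, 1 ≤ k → k ≤ r → (Δ k).PosSemidef) (hvec : Fin n → ℝ)
    {Λ : Matrix (Fin n) (Fin n) ℝ} (hΛ : Λ ∈ Lset n r x Δ) :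
    Ffun n r x Δ hvec Λ = 1 / 2 * FfunOfLamSeqZero n r x Δ hvec (LamSeq n r x Δ Λ 0) := by
  set L : ℕ → ℝ := fun k => Real.log (LamSeq n r x Δ Λ k).det
  have hdet : ∀ k ≤ r, (LamSeq n r x Δ Λ k).det ≠ 0 := fun k hk => by
    rw [LamSeq_eq_add Λ hk]
    exact (hΛ.2.add_posSemidef (posSemidef_sum_range_smul hx hΔ hk)).det_pos.ne'
  have hsum : ∑ k ∈ Finset.range r,
        1 / x k * Real.log ((LamSeq n r x Δ Λ (k + 1)).det / (LamSeq n r x Δ Λ k).det)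
      = ∑ k ∈ Finset.range r, (x k)⁻¹ * (L (k + 1) - L k) :=
    Finset.sum_congr rfl fun k hk => by
      have := Finset.mem_range.1 hk
      rw [Real.log_div (hdet (k + 1) this) (hdet k this.le), one_div]
  have hterms : ∀ k ∈ Finset.range r, ((x k)⁻¹ - (x (k + 1))⁻¹) * (L (k + 1) - L 0)
      = ((x k)⁻¹ - (x (k + 1))⁻¹) * (Real.log (LamSeq n r x Δ Λ 0
          + ∑ ℓ ∈ Finset.range (k + 1), x ℓ • Δ (ℓ + 1)).det - L 0) := fun k hk => by
    rw [← LamSeq_eq_add Λ (Finset.mem_range.1 hk)]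
  rw [Ffun, FfunOfLamSeqZero, hsum, sum_range_mul_sub_eq, Finset.sum_congr rfl hterms, hxr,
    inv_one]
  simp only [L, LamSeq_self]
  ring

theorem convexOn_FfunOfLamSeqZero (hx0 : 0 < x 0) (hxmono : ∀ k < r, x k ≤ x (k + 1))
    (hΔ : ∀ k, 1 ≤ k → k ≤ r → (Δ k).PosSemidef) (hvec : Fin n → ℝ) :
    ConvexOn ℝ {A | A.PosDef} (FfunOfLamSeqZero n r x Δ hvec) := by
  have hpos := pos_of_pos_of_le_succ hx0 hxmono
  refine (convexOn_neg_log_det.add (convexOn_inv_mulVec_dotProduct hvec)).add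
    (convexOn_sum convex_setOf_posDef _ fun k hk => ?_)
  have hk := Finset.mem_range.1 hk
  exact (convexOn_log_det_add_sub_log_det (posSemidef_sum_range_smul
    (fun ℓ hℓ => (hpos ℓ hℓ.le).le) hΔ hk)).smul
    (sub_nonneg.2 (inv_anti₀ (hpos k hk.le) (hxmono k hk)))

end LamSeq

theorem stmt4_general (n r : ℕ)
    (x : ℕ → ℝ) (hx0 : 0 < x 0) (hxmono : ∀ k < r, x k < x (k + 1)) (hxr : x r = 1)
    (Δ : ℕ → Matrix (Fin n) (Fin n) ℝ) (hΔ : ∀ k, 1 ≤ k → k ≤ r → (Δ k).PosSemidef)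
    (hvec : Fin n → ℝ)
    (Q : Matrix (Fin n) (Fin n) ℝ) :
    Convex ℝ (Lset n r x Δ) ∧
      ConvexOn ℝ (Lset n r x Δ)
        (fun Λ => (1 / 2) * (Λ * Q).trace + Ffun n r x Δ hvec Λ) := by
  have hmono : ∀ k < r, x k ≤ x (k + 1) := fun k hk => (hxmono k hk).le
  have hx : ∀ k < r, 0 ≤ x k := fun k hk => (pos_of_pos_of_le_succ hx0 hmono k hk.le).le
  have htrace : ConvexOn ℝ (Lset n r x Δ) fun Λ => (1 / 2) * (Λ * Q).trace :=
    ((traceLinearMap (Fin n) ℝ ℝ ∘ₗ LinearMap.mulRight ℝ Q).convexOn convex_Lset).smul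
      (by norm_num)
  have hF : ConvexOn ℝ (Lset n r x Δ)
      fun Λ => 1 / 2 * FfunOfLamSeqZero n r x Δ hvec (LamSeq n r x Δ Λ 0) := by
    have := (convexOn_FfunOfLamSeqZero hx0 hmono hΔ hvec).translate_right
      (-∑ ℓ ∈ Finset.Ico 0 r, x ℓ • Δ (ℓ + 1))
    simp only [neg_add_eq_sub] at this
    exact (this.subset (fun Λ hΛ => hΛ.2) convex_Lset).smul (by norm_num)
  refine ⟨convex_Lset, (htrace.add hF).congr fun Λ hΛ => ?_⟩
  simp only [Pi.add_apply, Ffun_eq_FfunOfLamSeqZero hx hxr hΔ hvec hΛ]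

/-- The set `L` is convex and `Λ ↦ (1/2) tr(ΛQ) + F(Λ)` is convex
on `L`. -/
theorem stmt4 (n r : ℕ) (hn : 1 ≤ n) (hr : 1 ≤ r)
    (x : ℕ → ℝ) (hx0 : 0 < x 0) (hxmono : ∀ k < r, x k < x (k + 1)) (hxr : x r = 1)
    (Δ : ℕ → Matrix (Fin n) (Fin n) ℝ) (hΔ : ∀ k, 1 ≤ k → k ≤ r → (Δ k).PosSemidef)
    (hvec : Fin n → ℝ)
    (Q : Matrix (Fin n) (Fin n) ℝ) (hQsymm : Q.IsSymm) :
    Convex ℝ (Lset n r x Δ) ∧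
      ConvexOn ℝ (Lset n r x Δ)
        (fun Λ => (1 / 2) * (Λ * Q).trace + Ffun n r x Δ hvec Λ) :=
  stmt4_general n r x hx0 hxmono hxr Δ hΔ hvec Q
end

section
/- Let n ≥ 1, let Λ be an n×n real symmetric positive definite matrix, let Δ be an n×n real symmetric positive semidefinite matrix, and let x ≥ 0. Then det(Λ + xΔ) ≥ det(Λ) · (1 + x·λ_max(Δ)/λ_max(Λ)), where λ_max denotes the largest eigenvalue of a real symmetric matrix. -/
/-!
Write `Λ = S * S` with `S = √Λ` and `Δ = S * N * S` with `N = S⁻¹ Δ S⁻¹ ⪰ 0`. Then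
`det (Λ + x Δ) = det Λ · det (1 + x N) = det Λ · ∏ᵢ (1 + x νᵢ) ≥ det Λ · (1 + x ν_max)`, where
`νᵢ` are the eigenvalues of `N`. In the Loewner order, `Δ = S N S ≤ ν_max S² = ν_max Λ ≤
ν_max λ_max(Λ) · 1`, so `λ_max(Δ) ≤ ν_max λ_max(Λ)`.
-/

open Matrix
open scoped MatrixOrder ComplexOrder

namespace Matrix

variable {n 𝕜 : Type*} [Fintype n] [DecidableEq n] [RCLike 𝕜]

theorem IsHermitian.le_smul_one_iff_iSup_eigenvalues_le [Nonempty n] {A : Matrix n n 𝕜}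
    (hA : A.IsHermitian) (r : ℝ) : A ≤ r • 1 ↔ ⨆ i, hA.eigenvalues i ≤ r := by
  rw [← Algebra.algebraMap_eq_smul_one, le_algebraMap_iff_spectrum_le hA.isSelfAdjoint,
    hA.spectrum_real_eq_range_eigenvalues, Set.forall_mem_range,
    ciSup_le_iff (Set.finite_range _).bddAbove]

theorem PosSemidef.iSup_eigenvalues_nonneg [Nonempty n] {A : Matrix n n 𝕜} (hA : A.PosSemidef) :
    0 ≤ ⨆ i, hA.1.eigenvalues i :=
  le_ciSup_of_le (Set.finite_range _).bddAbove (Classical.arbitrary n) (hA.eigenvalues_nonneg _)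

theorem PosDef.iSup_eigenvalues_pos [Nonempty n] {A : Matrix n n 𝕜} (hA : A.PosDef) :
    0 < ⨆ i, hA.1.eigenvalues i :=
  (hA.eigenvalues_pos _).trans_le (le_ciSup (Set.finite_range _).bddAbove (Classical.arbitrary n))

theorem iSup_eigenvalues_le_mul_iSup_eigenvalues [Nonempty n] {S N Λ Δ : Matrix n n 𝕜}
    (hS : IsSelfAdjoint S) (hN : N.PosSemidef) (hΛ : Λ.IsHermitian) (hΔ : Δ.IsHermitian)
    (hSS : S * S = Λ) (hSNS : S * N * S = Δ) :
    ⨆ i, hΔ.eigenvalues i ≤ (⨆ i, hN.1.eigenvalues i) * ⨆ i, hΛ.eigenvalues i := by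
  set μ := ⨆ i, hN.1.eigenvalues i
  set b := ⨆ i, hΛ.eigenvalues i
  have hN_le : N ≤ μ • 1 := (hN.1.le_smul_one_iff_iSup_eigenvalues_le μ).mpr le_rfl
  have hΛ_le : Λ ≤ b • 1 := (hΛ.le_smul_one_iff_iSup_eigenvalues_le b).mpr le_rfl
  rw [← hΔ.le_smul_one_iff_iSup_eigenvalues_le]
  calc Δ = S * N * S := hSNS.symm
    _ ≤ S * (μ • 1) * S := hS.conjugate_le_conjugate hN_le
    _ = μ • Λ := by rw [Matrix.mul_smul, Matrix.smul_mul, mul_one, hSS]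
    _ ≤ μ • (b • 1) := smul_le_smul_of_nonneg_left hΛ_le hN.iSup_eigenvalues_nonneg
    _ = (μ * b) • 1 := smul_smul μ b 1

theorem det_add_smul_eq_det_mul_det_one_add_smul {R : Type*} [CommRing R]
    {S N Λ Δ : Matrix n n R} (hSS : S * S = Λ) (hSNS : S * N * S = Δ) (x : R) :
    (Λ + x • Δ).det = Λ.det * (1 + x • N).det := by
  have h_conj : S * S + x • (S * N * S) = S * (1 + x • N) * S := by
    simp only [mul_add, add_mul, mul_one, Matrix.mul_smul, Matrix.smul_mul]
  rw [← hSS, ← hSNS, h_conj, det_mul, det_mul, det_mul]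
  ring

theorem PosDef.exists_sqrt_conj_posSemidef {Λ Δ : Matrix n n 𝕜} (hΛ : Λ.PosDef)
    (hΔ : Δ.PosSemidef) :
    ∃ S N : Matrix n n 𝕜, IsSelfAdjoint S ∧ N.PosSemidef ∧ S * S = Λ ∧ S * N * S = Δ := by
  set S := CFC.sqrt Λ
  have hS : IsSelfAdjoint S := (CFC.sqrt_nonneg Λ).isSelfAdjoint
  have hSS : S * S = Λ := CFC.sqrt_mul_sqrt_self Λ hΛ.posSemidef.nonneg
  have hS_det : IsUnit S.det :=
    isUnit_of_mul_isUnit_left (by rw [← det_mul, hSS]; exact hΛ.isUnit.map detMonoidHom)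
  refine ⟨S, S⁻¹ * Δ * S⁻¹, hS, ?_, hSS, ?_⟩
  · have hS_herm : Sᴴ = S := hS
    simpa [conjTranspose_nonsing_inv, hS_herm] using hΔ.conjTranspose_mul_mul_same S⁻¹
  · rw [← mul_assoc, ← mul_assoc, mul_nonsing_inv S hS_det, one_mul, mul_assoc,
      nonsing_inv_mul S hS_det, mul_one]

theorem PosSemidef.one_add_mul_iSup_eigenvalues_le_det [Nonempty n] {A : Matrix n n ℝ}
    (hA : A.PosSemidef) {x : ℝ} (hx : 0 ≤ x) :
    1 + x * ⨆ i, hA.1.eigenvalues i ≤ (1 + x • A).det := by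
  have h_det : (1 + x • A).det = ∏ i, (1 + x * hA.1.eigenvalues i) := by
    have h_cfc : 1 + x • A = cfc (fun t => 1 + x * t) A := by
      rw [cfc_add .., cfc_const_one .., cfc_const_mul_id ..]
    rw [h_cfc, hA.1.cfc_eq, IsHermitian.cfc]
    simp [-Unitary.conjStarAlgAut_apply]
  have h_one_le (i : n) : 1 ≤ 1 + x * hA.1.eigenvalues i :=
    le_add_of_nonneg_right (mul_nonneg hx (hA.eigenvalues_nonneg i))
  obtain ⟨i, hi⟩ := exists_eq_ciSup_of_finite (f := hA.1.eigenvalues)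
  rw [h_det, ← hi]
  simpa using Finset.prod_le_prod_of_subset_of_one_le (Finset.subset_univ {i})
    (by simp [(zero_le_one.trans (h_one_le i))]) (fun j _ _ => h_one_le j)

end Matrix

/-- For `Λ` symmetric positive definite, `Δ` symmetric positive
semidefinite and `x ≥ 0`, one has
`det(Λ + xΔ) ≥ det Λ · (1 + x · λ_max(Δ)/λ_max(Λ))`, where `λ_max` denotes the
largest eigenvalue of a real symmetric matrix. -/
theorem stmt5 (n : ℕ) (hn : 1 ≤ n) (Λ Δ : Matrix (Fin n) (Fin n) ℝ)
    (hΛ : Λ.PosDef) (hΔ : Δ.PosSemidef) (x : ℝ) (hx : 0 ≤ x) :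
    Λ.det * (1 + x * (⨆ i, hΔ.1.eigenvalues i) / (⨆ i, hΛ.1.eigenvalues i)) ≤
      (Λ + x • Δ).det := by
  have : Nonempty (Fin n) := ⟨⟨0, hn⟩⟩
  obtain ⟨S, N, hS, hN, hSS, hSNS⟩ := hΛ.exists_sqrt_conj_posSemidef hΔ
  have h_max := iSup_eigenvalues_le_mul_iSup_eigenvalues hS hN hΛ.1 hΔ.1 hSS hSNS
  have h_ratio : x * (⨆ i, hΔ.1.eigenvalues i) / (⨆ i, hΛ.1.eigenvalues i) ≤
      x * ⨆ i, hN.1.eigenvalues i := by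
    rw [div_le_iff₀ hΛ.iSup_eigenvalues_pos, mul_assoc]
    exact mul_le_mul_of_nonneg_left h_max hx
  rw [det_add_smul_eq_det_mul_det_one_add_smul hSS hSNS]
  gcongr
  · exact hΛ.det_pos.le
  · exact (add_le_add_right h_ratio 1).trans (hN.one_add_mul_iSup_eigenvalues_le_det hx)
end

section
/- Let n ≥ 1 and let A and B be n×n real symmetric positive semidefinite matrices such that A − B is positive semidefinite. Then for every integer m ≥ 1, the matrix A^{∘m} − B^{∘m} is positive semidefinite, where M^{∘m} denotes the m-th entrywise (Hadamard) power of M, i.e. (M^{∘m})_{ij} = (M_{ij})^m. -/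
/-
Write `A^{∘m}` for the entrywise power. Since `A = B + (A - B)`, the telescoping identity
`A^{∘(m+1)} - B^{∘(m+1)} = A ⊙ (A^{∘m} - B^{∘m}) + (A - B) ⊙ B^{∘m}`
reduces the claim, by induction on `m`, to the Schur product theorem: Hadamard products of
positive semidefinite matrices are positive semidefinite (which also makes every `B^{∘m}` one).
-/

namespace Matrix

open scoped ComplexOrder

variable {ι 𝕜 : Type*} [RCLike 𝕜]

theorem hadamard_pow_succ (A : Matrix ι ι 𝕜) (m : ℕ) :
    (of fun i j => A i j ^ (m + 1)) = A ⊙ of fun i j => A i j ^ m := by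
  ext i j
  simp [pow_succ']

theorem PosSemidef.hadamard_pow [Finite ι] {A : Matrix ι ι 𝕜} (hA : A.PosSemidef) (m : ℕ) :
    (of fun i j => A i j ^ m).PosSemidef := by
  induction m with
  | zero =>
    have hones : (of fun (_ _ : ι) => (1 : 𝕜)) = vecMulVec 1 (star 1) := by
      ext i j
      simp [vecMulVec]
    simpa [hones] using posSemidef_vecMulVec_self_star (1 : ι → 𝕜)
  | succ m ih => simpa [hadamard_pow_succ] using hA.hadamard ih

theorem hadamard_pow_succ_sub (A B : Matrix ι ι 𝕜) (m : ℕ) :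
    (of fun i j => A i j ^ (m + 1)) - (of fun i j => B i j ^ (m + 1)) =
      A ⊙ ((of fun i j => A i j ^ m) - of fun i j => B i j ^ m) +
        (A - B) ⊙ of fun i j => B i j ^ m := by
  ext i j
  simp only [sub_apply, add_apply, hadamard_apply, of_apply]
  ring

theorem PosSemidef.hadamard_pow_sub [Finite ι] {A B : Matrix ι ι 𝕜} (hB : B.PosSemidef)
    (hAB : (A - B).PosSemidef) (m : ℕ) :
    ((of fun i j => A i j ^ m) - of fun i j => B i j ^ m).PosSemidef := by
  have hA : A.PosSemidef := by simpa using hB.add hAB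
  induction m with
  | zero => simpa using PosSemidef.zero
  | succ m ih =>
    rw [hadamard_pow_succ_sub]
    exact (hA.hadamard ih).add (hAB.hadamard (hB.hadamard_pow m))

end Matrix

theorem stmt7_general (n : ℕ) (A B : Matrix (Fin n) (Fin n) ℝ)
    (hB : B.PosSemidef) (hAB : (A - B).PosSemidef)
    (m : ℕ) :
    ((Matrix.of fun i j => A i j ^ m) - (Matrix.of fun i j => B i j ^ m)).PosSemidef :=
  hB.hadamard_pow_sub hAB m

/-- If `A`, `B` and `A - B` are symmetric positive semidefinite,
then so is `A^{∘m} - B^{∘m}` for every `m ≥ 1`, where `M^{∘m}` denotes the `m`-th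
entrywise (Hadamard) power. -/
theorem stmt7 (n : ℕ) (hn : 1 ≤ n) (A B : Matrix (Fin n) (Fin n) ℝ)
    (hA : A.PosSemidef) (hB : B.PosSemidef) (hAB : (A - B).PosSemidef)
    (m : ℕ) (hm : 1 ≤ m) :
    ((Matrix.of fun i j => A i j ^ m) - (Matrix.of fun i j => B i j ^ m)).PosSemidef :=
  stmt7_general n A B hB hAB m
end

section
/- Let n ≥ 1 and c > 0. There exists a constant L, depending only on n and c, such that for every N ≥ 1, every ε with 0 < ε ≤ 1, every pair of configurations σ, σ′ ∈ S_N^n, and every pair of n×n real matrices A, A′ satisfying ‖A‖_∞ ≤ c, ‖A′‖_∞ ≤ c, tr( (A − I)·R(σ,σ)·(A − I)ᵀ ) ≤ c√ε and tr( (A′ − I)·R(σ′,σ′)·(A′ − I)ᵀ ) ≤ c√ε, one has ‖ R(Aσ, A′σ′) − R(σ, σ′) ‖_∞ ≤ L·ε^{1/4}. -/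
open Matrix Real

/-- The entrywise supremum norm `‖M‖_∞ = max_{i,j} |M_{ij}|` of a matrix. -/
noncomputable def supNorm {n : ℕ} (M : Matrix (Fin n) (Fin n) ℝ) : ℝ :=
  ⨆ i, ⨆ j, |M i j|

/-- The `n × n` overlap matrix of two configurations `σ, τ ∈ (ℝ^N)^n`:
`R(σ,τ)_{jj'} = (1/N) ⟨σ(j), τ(j')⟩`. -/
noncomputable def overlap {n N : ℕ} (σ τ : Fin n → Fin N → ℝ) :
    Matrix (Fin n) (Fin n) ℝ :=
  Matrix.of fun j j' => (1 / (N : ℝ)) * ∑ i, σ j i * τ j' i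

/-- The configuration `Aσ` obtained by applying the `n × n` matrix `A` to the
`n`-vector of `i`-th coordinates of `σ`, for each `i ≤ N`. -/
noncomputable def applyMat {n N : ℕ} (A : Matrix (Fin n) (Fin n) ℝ)
    (σ : Fin n → Fin N → ℝ) : Fin n → Fin N → ℝ :=
  fun j i => ∑ k, A j k * σ k i

/-! Writing `Aσ = σ + u` with `u = (A - I)σ`, bilinearity gives
`R(Aσ, A'σ') - R(σ,σ') = R(u,σ') + R(σ,v) + R(u,v)`. By Cauchy–Schwarz each entry of
`R(x,y)` is at most `√(R(x,x)_{jj} R(y,y)_{j'j'})`; the diagonal of `R(σ,σ)` is `1`, and the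
diagonal of `R(u,u) = (A - I) R(σ,σ) (A - I)ᵀ` is bounded by its trace `c√ε`. Hence every entry
is at most `2 √(c√ε) + c√ε ≤ (2√c + |c|) ε^{1/4}`. -/

theorem supNorm_le {n : ℕ} {M : Matrix (Fin n) (Fin n) ℝ} {b : ℝ} (h : ∀ i j, |M i j| ≤ b)
    (hb : 0 ≤ b) : supNorm M ≤ b :=
  Real.iSup_le (fun i => Real.iSup_le (h i) hb) hb

section Configurations

variable {n N : ℕ}

theorem applyMat_one (σ : Fin n → Fin N → ℝ) : applyMat 1 σ = σ := by
  ext j i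
  simp [applyMat, Matrix.one_apply]

theorem applyMat_add (A B : Matrix (Fin n) (Fin n) ℝ) (σ : Fin n → Fin N → ℝ) :
    applyMat (A + B) σ = applyMat A σ + applyMat B σ := by
  ext j i
  simp [applyMat, add_mul, Finset.sum_add_distrib]

theorem applyMat_eq_add_applyMat_sub_one (A : Matrix (Fin n) (Fin n) ℝ)
    (σ : Fin n → Fin N → ℝ) : applyMat A σ = σ + applyMat (A - 1) σ := by
  conv_lhs => rw [← add_sub_cancel 1 A, applyMat_add, applyMat_one]

theorem overlap_add_left (σ σ' τ : Fin n → Fin N → ℝ) :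
    overlap (σ + σ') τ = overlap σ τ + overlap σ' τ := by
  ext j j'
  simp [overlap, add_mul, Finset.sum_add_distrib, mul_add]

theorem overlap_add_right (σ τ τ' : Fin n → Fin N → ℝ) :
    overlap σ (τ + τ') = overlap σ τ + overlap σ τ' := by
  ext j j'
  simp [overlap, mul_add, Finset.sum_add_distrib]

theorem overlap_applyMat (A B : Matrix (Fin n) (Fin n) ℝ) (σ τ : Fin n → Fin N → ℝ) :
    overlap (applyMat A σ) (applyMat B τ) = A * overlap σ τ * Bᵀ := by
  ext j j'
  simp only [Matrix.mul_apply, overlap, applyMat, Matrix.of_apply, Matrix.transpose_apply,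
    Finset.mul_sum, Finset.sum_mul]
  rw [Finset.sum_comm]
  refine Finset.sum_congr rfl fun i _ => ?_
  rw [Finset.sum_comm]
  exact Finset.sum_congr rfl fun k _ => Finset.sum_congr rfl fun l _ => by ring

theorem overlap_self_apply_nonneg (σ : Fin n → Fin N → ℝ) (j : Fin n) :
    0 ≤ overlap σ σ j j := by
  simp only [overlap, Matrix.of_apply, ← sq]
  positivity

theorem overlap_self_apply_le_trace (σ : Fin n → Fin N → ℝ) (j : Fin n) :
    overlap σ σ j j ≤ (overlap σ σ).trace :=
  Finset.single_le_sum (f := fun k => overlap σ σ k k)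
    (fun k _ => overlap_self_apply_nonneg σ k) (Finset.mem_univ j)

theorem overlap_self_apply_eq_one {σ : Fin n → Fin N → ℝ} {j : Fin n} (hN : N ≠ 0)
    (hσ : ∑ i, σ j i ^ 2 = N) : overlap σ σ j j = 1 := by
  simp only [overlap, Matrix.of_apply, ← sq, hσ]
  field_simp

theorem abs_overlap_apply_le (σ τ : Fin n → Fin N → ℝ) (j j' : Fin n) :
    |overlap σ τ j j'| ≤ √(overlap σ σ j j) * √(overlap τ τ j' j') := by
  rw [← Real.sqrt_mul (overlap_self_apply_nonneg σ j)]
  refine Real.abs_le_sqrt ?_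
  simp only [overlap, Matrix.of_apply, ← sq]
  rw [mul_pow]
  calc (1 / (N : ℝ)) ^ 2 * (∑ i, σ j i * τ j' i) ^ 2
      ≤ (1 / (N : ℝ)) ^ 2 * ((∑ i, σ j i ^ 2) * ∑ i, τ j' i ^ 2) := by
        gcongr
        exact Finset.sum_mul_sq_le_sq_mul_sq _ _ _
    _ = (1 / (N : ℝ) * ∑ i, σ j i ^ 2) * (1 / (N : ℝ) * ∑ i, τ j' i ^ 2) := by ring

theorem abs_overlap_add_add_sub_le (σ τ u v : Fin n → Fin N → ℝ) (j j' : Fin n) :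
    |(overlap (σ + u) (τ + v) - overlap σ τ) j j'|
      ≤ √(overlap u u j j) * √(overlap τ τ j' j')
        + √(overlap σ σ j j) * √(overlap v v j' j')
        + √(overlap u u j j) * √(overlap v v j' j') := by
  have hsplit :
      overlap (σ + u) (τ + v) - overlap σ τ = overlap u τ + overlap σ v + overlap u v := by
    rw [overlap_add_left, overlap_add_right, overlap_add_right]
    abel
  rw [hsplit]
  refine (abs_add_three _ _ _).trans ?_
  gcongr <;> exact abs_overlap_apply_le _ _ _ _

end Configurations

theorem two_mul_sqrt_add_le_rpow_quarter (c : ℝ) {ε : ℝ} (hε : 0 < ε) (hε1 : ε ≤ 1) :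
    2 * √(c * √ε) + c * √ε ≤ (2 * √c + |c|) * ε ^ ((1 : ℝ) / 4) := by
  have hquarter : √(√ε) = ε ^ ((1 : ℝ) / 4) := by
    rw [Real.sqrt_eq_rpow, Real.sqrt_eq_rpow, ← Real.rpow_mul hε.le]
    norm_num
  have hsqrt_le : √ε ≤ ε ^ ((1 : ℝ) / 4) := by
    rw [Real.sqrt_eq_rpow]
    exact Real.rpow_le_rpow_of_exponent_ge hε hε1 (by norm_num)
  rw [Real.sqrt_mul' c (Real.sqrt_nonneg ε), hquarter, add_mul, mul_assoc]
  gcongr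
  exact le_abs_self c

theorem stmt11_general (n : ℕ) (c : ℝ) :
    ∃ L : ℝ, ∀ N : ℕ, 1 ≤ N → ∀ ε : ℝ, 0 < ε → ε ≤ 1 →
      ∀ σ σ' : Fin n → Fin N → ℝ,
        (∀ j, ∑ i, σ j i ^ 2 = (N : ℝ)) → (∀ j, ∑ i, σ' j i ^ 2 = (N : ℝ)) →
      ∀ A A' : Matrix (Fin n) (Fin n) ℝ,
        supNorm A ≤ c → supNorm A' ≤ c →
        ((A - 1) * overlap σ σ * (A - 1)ᵀ).trace ≤ c * Real.sqrt ε →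
        ((A' - 1) * overlap σ' σ' * (A' - 1)ᵀ).trace ≤ c * Real.sqrt ε →
        supNorm (overlap (applyMat A σ) (applyMat A' σ') - overlap σ σ') ≤
          L * ε ^ ((1 : ℝ) / 4) := by
  refine ⟨2 * √c + |c|, fun N hN ε hε hε1 σ σ' hσ hσ' A A' _ _ htr htr' => ?_⟩
  refine supNorm_le (fun j j' => ?_) (by positivity)
  set u := applyMat (A - 1) σ
  set v := applyMat (A' - 1) σ'
  have hu : overlap u u j j ≤ c * √ε :=
    (overlap_self_apply_le_trace u j).trans (by rwa [overlap_applyMat])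
  have hv : overlap v v j' j' ≤ c * √ε :=
    (overlap_self_apply_le_trace v j').trans (by rwa [overlap_applyMat])
  have hδ : 0 ≤ c * √ε := (overlap_self_apply_nonneg u j).trans hu
  rw [applyMat_eq_add_applyMat_sub_one A, applyMat_eq_add_applyMat_sub_one A']
  refine (abs_overlap_add_add_sub_le σ σ' u v j j').trans
    (le_trans ?_ (two_mul_sqrt_add_le_rpow_quarter c hε hε1))
  rw [overlap_self_apply_eq_one (by omega) (hσ j), overlap_self_apply_eq_one (by omega) (hσ' j'),
    Real.sqrt_one, mul_one, one_mul]
  have hu' := Real.sqrt_le_sqrt hu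
  have hv' := Real.sqrt_le_sqrt hv
  calc √(overlap u u j j) + √(overlap v v j' j') + √(overlap u u j j) * √(overlap v v j' j')
      ≤ √(c * √ε) + √(c * √ε) + √(c * √ε) * √(c * √ε) := by gcongr
    _ = 2 * √(c * √ε) + c * √ε := by rw [Real.mul_self_sqrt hδ]; ring

/-- the modified overlaps are close to the overlaps, equation
`overlaps_bound` of the paper.  There is a constant `L = L(n,c)` such that for all
`N ≥ 1`, `0 < ε ≤ 1`, configurations `σ, σ' ∈ S_N^n` and matrices `A, A'` with
`‖A‖_∞, ‖A'‖_∞ ≤ c`, `tr((A-I) R(σ,σ) (A-I)ᵀ) ≤ c√ε` and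
`tr((A'-I) R(σ',σ') (A'-I)ᵀ) ≤ c√ε`, one has
`‖R(Aσ, A'σ') - R(σ,σ')‖_∞ ≤ L ε^{1/4}`. -/
theorem stmt11 (n : ℕ) (hn : 1 ≤ n) (c : ℝ) (hc : 0 < c) :
    ∃ L : ℝ, ∀ N : ℕ, 1 ≤ N → ∀ ε : ℝ, 0 < ε → ε ≤ 1 →
      ∀ σ σ' : Fin n → Fin N → ℝ,
        (∀ j, ∑ i, σ j i ^ 2 = (N : ℝ)) → (∀ j, ∑ i, σ' j i ^ 2 = (N : ℝ)) →
      ∀ A A' : Matrix (Fin n) (Fin n) ℝ,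
        supNorm A ≤ c → supNorm A' ≤ c →
        ((A - 1) * overlap σ σ * (A - 1)ᵀ).trace ≤ c * Real.sqrt ε →
        ((A' - 1) * overlap σ' σ' * (A' - 1)ᵀ).trace ≤ c * Real.sqrt ε →
        supNorm (overlap (applyMat A σ) (applyMat A' σ') - overlap σ σ') ≤
          L * ε ^ ((1 : ℝ) / 4) :=
  stmt11_general n c
end

section
/- For every M ≥ 1 and every R > 0 there exists N₀ such that for all integers N ≥ N₀ and all x ∈ ℝ^M with |x_j| ≤ R for every j ≤ M, one has Σ_{j=1}^{M} ((M + N − j − 2)/2) · log( 1 − x_j²/(M + N + 1 − j) ) ≥ − ‖x‖²/2 − ‖x‖⁴/(2N), where ‖x‖² = Σ_{j=1}^M x_j². Equivalently, the density f_{M,N}(x) = b_{M,N}·∏_{j=1}^{M}(1 − x_j²/(M+N+1−j))^{(M+N−j−2)/2} satisfies log( f_{M,N}(x)/f_M(x) ) ≥ log( b_{M,N}·(2π)^{M/2} ) − ‖x‖⁴/(2N), where f_M(x) = (2π)^{−M/2}·exp(−‖x‖²/2). -/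
open Real

/-! Termwise, `log (1 - s/c) ≥ -s/(c - s)` (from `log y ≥ 1 - 1/y`), and since
`c = M + N + 1 - j` is at least `N + 1`, the weighted bound `((c - 3)/2) · (-s/(c - s))` is at least
`-s/2 - s²/(2N)` as soon as `s² ≤ 3N`. Summing over `j` and using `∑ x_j⁴ ≤ ‖x‖⁴` gives the claim. -/

lemma neg_div_sub_le_log_one_sub_div {s c : ℝ} (hc : 0 < c) (hsc : s < c) :
    -(s / (c - s)) ≤ log (1 - s / c) := by
  have hpos : 0 < 1 - s / c := by rw [sub_pos, div_lt_one hc]; exact hsc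
  convert one_sub_inv_le_log_of_pos hpos using 1
  rw [one_sub_div hc.ne', inv_div, one_sub_div (sub_pos.mpr hsc).ne']
  ring

lemma neg_half_sub_sq_div_le_mul_log {N c s : ℝ} (hN : 0 < N) (hc3 : 3 ≤ c) (hNc : N + 1 ≤ c)
    (hs : 0 ≤ s) (hsc : s < c) (hs2 : s ^ 2 ≤ 3 * N) :
    -s / 2 - s ^ 2 / (2 * N) ≤ ((c - 3) / 2) * log (1 - s / c) := by
  have hcs : 0 < c - s := sub_pos.mpr hsc
  calc -s / 2 - s ^ 2 / (2 * N) ≤ ((c - 3) / 2) * -(s / (c - s)) := by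
        have hdiff : ((c - 3) / 2) * -(s / (c - s)) - (-s / 2 - s ^ 2 / (2 * N)) =
            s * (3 * N + s * (c - N - s)) / (2 * N * (c - s)) := by
          field_simp
          ring
        rw [← sub_nonneg, hdiff]
        refine div_nonneg (mul_nonneg hs ?_) (by positivity)
        nlinarith [mul_le_mul_of_nonneg_left hNc hs]
    _ ≤ ((c - 3) / 2) * log (1 - s / c) :=
        mul_le_mul_of_nonneg_left (neg_div_sub_le_log_one_sub_div (by linarith) hsc)
          (by linarith)

theorem stmt14_general (M : ℕ) (R : ℝ) :
    ∃ N₀ : ℕ, ∀ N : ℕ, N₀ ≤ N → ∀ x : Fin M → ℝ, (∀ j, |x j| ≤ R) →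
      -(∑ j, x j ^ 2) / 2 - (∑ j, x j ^ 2) ^ 2 / (2 * (N : ℝ)) ≤
        ∑ j : Fin M,
          (((M : ℝ) + N - ((j : ℕ) + 1) - 2) / 2) *
            Real.log (1 - x j ^ 2 / ((M : ℝ) + N + 1 - ((j : ℕ) + 1))) := by
  refine ⟨⌈R ^ 4 + R ^ 2 + 2⌉₊, fun N hN x hx => ?_⟩
  have hNR : R ^ 4 + R ^ 2 + 2 ≤ (N : ℝ) := (Nat.le_ceil _).trans (by exact_mod_cast hN)
  have hN2 : (2 : ℝ) ≤ N := by nlinarith [sq_nonneg R, sq_nonneg (R ^ 2)]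
  have hN : (0 : ℝ) < N := by linarith
  have hterm (j : Fin M) : -(x j ^ 2) / 2 - (x j ^ 2) ^ 2 / (2 * (N : ℝ)) ≤
      (((M : ℝ) + N - ((j : ℕ) + 1) - 2) / 2) *
        log (1 - x j ^ 2 / ((M : ℝ) + N + 1 - ((j : ℕ) + 1))) := by
    have hjM : ((j : ℕ) : ℝ) + 1 ≤ M := by exact_mod_cast j.isLt
    have hxR : x j ^ 2 ≤ R ^ 2 := sq_abs (x j) ▸ pow_le_pow_left₀ (abs_nonneg _) (hx j) 2
    convert neg_half_sub_sq_div_le_mul_log (c := (M : ℝ) + N + 1 - ((j : ℕ) + 1)) hN (by linarith) (by linarith) (sq_nonneg (x j))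
      (by nlinarith) (by nlinarith [pow_le_pow_left₀ (sq_nonneg (x j)) hxR 2]) using 3
    ring
  calc -(∑ j, x j ^ 2) / 2 - (∑ j, x j ^ 2) ^ 2 / (2 * (N : ℝ))
      ≤ -(∑ j, x j ^ 2) / 2 - (∑ j, (x j ^ 2) ^ 2) / (2 * (N : ℝ)) := by
        gcongr
        exact Finset.sum_sq_le_sq_sum_of_nonneg fun j _ => sq_nonneg (x j)
    _ = ∑ j, (-(x j ^ 2) / 2 - (x j ^ 2) ^ 2 / (2 * (N : ℝ))) := by
        rw [Finset.sum_sub_distrib, ← Finset.sum_div, ← Finset.sum_div, Finset.sum_neg_distrib]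
    _ ≤ _ := Finset.sum_le_sum fun j _ => hterm j

/-- density comparison in Step 2 of Lemma `ASS_Pert`/`ass_unpert`.
For every `M ≥ 1` and `R > 0` there is `N₀` such that for all `N ≥ N₀` and all
`x ∈ ℝ^M` with `|x_j| ≤ R`,
`∑_{j=1}^M ((M+N-j-2)/2) log(1 - x_j²/(M+N+1-j)) ≥ -‖x‖²/2 - ‖x‖⁴/(2N)`. -/
theorem stmt14 (M : ℕ) (hM : 1 ≤ M) (R : ℝ) (hR : 0 < R) :
    ∃ N₀ : ℕ, ∀ N : ℕ, N₀ ≤ N → ∀ x : Fin M → ℝ, (∀ j, |x j| ≤ R) →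
      -(∑ j, x j ^ 2) / 2 - (∑ j, x j ^ 2) ^ 2 / (2 * (N : ℝ)) ≤
        ∑ j : Fin M,
          (((M : ℝ) + N - ((j : ℕ) + 1) - 2) / 2) *
            Real.log (1 - x j ^ 2 / ((M : ℝ) + N + 1 - ((j : ℕ) + 1))) :=
  stmt14_general M R
end

section
/- For every fixed M ≥ 1, lim_{N→∞} ∏_{j=1}^{M} Γ((M+N+1−j)/2) / ( √π · Γ((M+N−j)/2) · √(M+N+1−j) ) = (2π)^{−M/2}. Equivalently, the normalizing constants b_{M,N} = ∏_{j=1}^{M} |S¹_{M+N−j}| / ( |S¹_{M+N+1−j}| · √(M+N+1−j) ), where |S¹_K| = 2π^{K/2}/Γ(K/2) is the surface area of the unit sphere in ℝ^K, converge to (2π)^{−M/2} as N → ∞. -/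
/-!
Log-convexity of `Γ` squeezes `Γ(x + 1/2)` between `x Γ(x) / √(x + 1/2)` and `Γ(x) √x`, so
`Γ(x + 1/2) ~ Γ(x) √(x + 1/2)` as `x → ∞` (Gautschi). With `x = (M + N - j)/2` each factor
therefore tends to `1 / (√π √2)`, and the product of the `M` factors tends to `(2π)^(-M/2)`.
-/

open Filter Real Topology

theorem tendsto_div_add_const_atTop (c : ℝ) : Tendsto (fun x ↦ x / (x + c)) atTop (𝓝 1) := by
  have h : Tendsto (fun x ↦ 1 - c / (x + c)) atTop (𝓝 (1 - 0)) :=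
    tendsto_const_nhds.sub <| tendsto_const_nhds.div_atTop <|
      tendsto_atTop_add_const_right _ _ tendsto_id
  rw [sub_zero] at h
  refine h.congr' ?_
  filter_upwards [eventually_gt_atTop (-c)] with x hx
  have : x + c ≠ 0 := by linarith
  field_simp
  ring

namespace Real

theorem Gamma_add_half_le_Gamma_mul_sqrt {x : ℝ} (hx : 0 < x) :
    Gamma (x + 1 / 2) ≤ Gamma x * √x := by
  have h := Gamma_mul_add_mul_le_rpow_Gamma_mul_rpow_Gamma hx (by linarith : 0 < x + 1)
    one_half_pos one_half_pos (add_halves 1)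
  rwa [show 1 / 2 * x + 1 / 2 * (x + 1) = x + 1 / 2 by ring, Gamma_add_one hx.ne', mul_comm x,
    mul_rpow (Gamma_pos_of_pos hx).le hx.le, ← mul_assoc, ← rpow_add (Gamma_pos_of_pos hx),
    add_halves, rpow_one, ← sqrt_eq_rpow] at h

theorem mul_Gamma_le_Gamma_add_half_mul_sqrt {x : ℝ} (hx : 0 < x) :
    x * Gamma x ≤ Gamma (x + 1 / 2) * √(x + 1 / 2) := by
  have hx' : 0 < x + 1 / 2 := by linarith
  have h := Gamma_mul_add_mul_le_rpow_Gamma_mul_rpow_Gamma hx' (by linarith : 0 < x + 1 / 2 + 1)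
    one_half_pos one_half_pos (add_halves 1)
  rwa [show 1 / 2 * (x + 1 / 2) + 1 / 2 * (x + 1 / 2 + 1) = x + 1 by ring, Gamma_add_one hx.ne',
    Gamma_add_one hx'.ne', mul_comm (x + 1 / 2), mul_rpow (Gamma_pos_of_pos hx').le hx'.le,
    ← mul_assoc, ← rpow_add (Gamma_pos_of_pos hx'), add_halves, rpow_one, ← sqrt_eq_rpow] at h

theorem tendsto_Gamma_add_half_div_Gamma_mul_sqrt :
    Tendsto (fun x ↦ Gamma (x + 1 / 2) / (Gamma x * √(x + 1 / 2))) atTop (𝓝 1) := by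
  refine tendsto_of_tendsto_of_tendsto_of_le_of_le' (tendsto_div_add_const_atTop (1 / 2))
    tendsto_const_nhds ?_ ?_
  · filter_upwards [eventually_gt_atTop 0] with x hx
    have hs : 0 < √(x + 1 / 2) := sqrt_pos.2 (by linarith)
    rw [div_le_div_iff₀ (by linarith) (mul_pos (Gamma_pos_of_pos hx) hs)]
    calc x * (Gamma x * √(x + 1 / 2)) = x * Gamma x * √(x + 1 / 2) := by ring
      _ ≤ Gamma (x + 1 / 2) * √(x + 1 / 2) * √(x + 1 / 2) :=
        mul_le_mul_of_nonneg_right (mul_Gamma_le_Gamma_add_half_mul_sqrt hx) hs.le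
      _ = Gamma (x + 1 / 2) * (x + 1 / 2) := by rw [mul_assoc, mul_self_sqrt (by linarith)]
  · filter_upwards [eventually_gt_atTop 0] with x hx
    have hΓ := Gamma_pos_of_pos hx
    rw [div_le_one (mul_pos hΓ (sqrt_pos.2 (by linarith)))]
    exact (Gamma_add_half_le_Gamma_mul_sqrt hx).trans
      (mul_le_mul_of_nonneg_left (sqrt_le_sqrt (by linarith)) hΓ.le)

end Real

theorem stmt15_general (M : ℕ) :
    Tendsto (fun N : ℕ =>
        ∏ j ∈ Finset.range M,
          Real.Gamma (((M : ℝ) + N + 1 - ((j : ℝ) + 1)) / 2) /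
            (Real.sqrt Real.pi * Real.Gamma (((M : ℝ) + N - ((j : ℝ) + 1)) / 2) *
              Real.sqrt ((M : ℝ) + N + 1 - ((j : ℝ) + 1))))
      atTop (nhds ((2 * Real.pi) ^ (-(M : ℝ) / 2))) := by
  have h_factor (j : ℕ) : Tendsto (fun N : ℕ =>
      Gamma (((M : ℝ) + N + 1 - ((j : ℝ) + 1)) / 2) /
        (√π * Gamma (((M : ℝ) + N - ((j : ℝ) + 1)) / 2) * √((M : ℝ) + N + 1 - ((j : ℝ) + 1))))
      atTop (𝓝 ((2 * π) ^ (-(1 / 2 : ℝ)))) := by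
    have h_arg : Tendsto (fun N : ℕ ↦ ((M : ℝ) + N - ((j : ℝ) + 1)) / 2) atTop atTop :=
      (tendsto_atTop_add_const_left _ ((M : ℝ) - (j + 1)) tendsto_natCast_atTop_atTop)
        |>.atTop_div_const two_pos |>.congr fun N ↦ by ring
    have h := (tendsto_Gamma_add_half_div_Gamma_mul_sqrt.comp h_arg).mul_const
      ((2 * π) ^ (-(1 / 2 : ℝ)))
    rw [one_mul] at h
    refine h.congr fun N ↦ ?_
    set x := ((M : ℝ) + N - ((j : ℝ) + 1)) / 2
    rw [show (M : ℝ) + N + 1 - ((j : ℝ) + 1) = 2 * (x + 1 / 2) by ring,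
      show 2 * (x + 1 / 2) / 2 = x + 1 / 2 by ring, rpow_neg (by positivity), ← sqrt_eq_rpow,
      sqrt_mul zero_le_two, sqrt_mul zero_le_two, Function.comp_apply]
    ring
  have h := tendsto_finsetProd (Finset.range M) fun j _ ↦ h_factor j
  rwa [Finset.prod_const, Finset.card_range, ← rpow_mul_natCast (by positivity),
    show -(1 / 2 : ℝ) * M = -M / 2 by ring] at h

/-- the normalizing constants `b_{M,N}` of the Poincaré limit
converge to `(2π)^{-M/2}`.  Using `|S¹_K| = 2π^{K/2}/Γ(K/2)`, the constants
`b_{M,N} = ∏_{j=1}^M |S¹_{M+N-j}|/(|S¹_{M+N+1-j}| √(M+N+1-j))` equal the displayed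
Gamma-function products, and they converge to `(2π)^{-M/2}` as `N → ∞`. -/
theorem stmt15 (M : ℕ) (hM : 1 ≤ M) :
    Tendsto (fun N : ℕ =>
        ∏ j ∈ Finset.range M,
          Real.Gamma (((M : ℝ) + N + 1 - ((j : ℝ) + 1)) / 2) /
            (Real.sqrt Real.pi * Real.Gamma (((M : ℝ) + N - ((j : ℝ) + 1)) / 2) *
              Real.sqrt ((M : ℝ) + N + 1 - ((j : ℝ) + 1))))
      atTop (nhds ((2 * Real.pi) ^ (-(M : ℝ) / 2))) :=
  stmt15_general M
end
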